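/- arXiv:2308.15021 — 3 statements merged into one kernel-verified Lean document; each statement's English description precedes it below -/
import Mathlib

section
/- Let G be a connected bipartite graph on vertex set {1,…,n} with bipartition (A,B). A vector a ∈ ℕ^n with a ≠ 0 is a solution of the system (*) if and only if both of the following hold: (1) supp(a) is a dominating set of G, and (2) the parallelization G^a is a matching-covered graph. -/
open MvPolynomial

/-! ## Algebraic notions: depth of quotients by homogeneous (monomial) ideals,
and the index of depth stability. -/

/-- The depth of `R/J` (for `R` a polynomial ring): the maximal length of a regular
sequence of homogeneous elements on `R/J`. -/
noncomputable def homDepth {k : Type} [Field k] {n : ℕ}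
    (J : Ideal (MvPolynomial (Fin n) k)) : ℕ :=
  sSup {r | ∃ rs : List (MvPolynomial (Fin n) k), rs.length = r ∧
    (∀ f ∈ rs, ∃ d, MvPolynomial.IsHomogeneous f d) ∧
    RingTheory.Sequence.IsRegular (MvPolynomial (Fin n) k ⧸ J) rs}

/-- The index of depth stability of an ideal `I`: the least `s ≥ 1` such that
`depth R/I^t = depth R/I^s` for all `t ≥ s`. -/
noncomputable def dstab {k : Type} [Field k] {n : ℕ}
    (I : Ideal (MvPolynomial (Fin n) k)) : ℕ :=
  sInf {s | 1 ≤ s ∧ ∀ t, s ≤ t → homDepth (I ^ t) = homDepth (I ^ s)}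

/-- The edge ideal of a graph `G` on vertices `{1,…,n}`: generated by the
monomials `xᵢxⱼ` for the edges `{i,j}` of `G`. -/
noncomputable def edgeIdeal (k : Type) [Field k] {n : ℕ} (G : SimpleGraph (Fin n)) :
    Ideal (MvPolynomial (Fin n) k) :=
  Ideal.span {m | ∃ i j, G.Adj i j ∧ m = X i * X j}

/-! ## Graph-theoretic notions -/

/-- A list of vertices forming an open path (at least one edge, no repeated vertex). -/
def IsOpenPathList {V : Type} (L : List V) : Prop := 2 ≤ L.length ∧ L.Nodup

/-- A list of vertices forming a (proper) cycle: closed, at least 3 edges,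
no repeated vertex except that the first vertex equals the last one. -/
def IsProperCycleList {V : Type} (L : List V) : Prop :=
  4 ≤ L.length ∧ L.head? = L.getLast? ∧ L.dropLast.Nodup

/-- A 2-cycle: an edge `{v,w}` with a specified endpoint `v`, regarded as the
closed walk `v, w, v` of length 2. -/
def IsTwoCycleList {V : Type} (L : List V) : Prop := ∃ v w : V, v ≠ w ∧ L = [v, w, v]

/-- An ear is a path (possibly closed, i.e. a cycle) or a 2-cycle. -/
def IsEarList {V : Type} (L : List V) : Prop :=
  IsOpenPathList L ∨ IsProperCycleList L ∨ IsTwoCycleList L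

/-- An ear which is a cycle (a proper cycle or a 2-cycle). -/
def IsCycleEarList {V : Type} (L : List V) : Prop :=
  IsProperCycleList L ∨ IsTwoCycleList L

/-- The set of edges traversed by an ear, as unordered pairs. -/
def earEdgeSet {V : Type} (L : List V) : Set (Sym2 V) :=
  {e | ∃ p ∈ L.zip L.tail, e = s(p.1, p.2)}

/-- A generalized ear decomposition of a connected graph `G`: a partition of the
edge set of `G` into a sequence of ears `L₁,…,L_r` (paths or 2-cycles) such that
`L₁` is a cycle (possibly a 2-cycle) and each later ear meets the union of the
earlier ones exactly at its endpoints. -/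
structure GenEarDecomp {V : Type} (G : SimpleGraph V) : Type where
  ears : List (List V)
  ears_nonempty : ears ≠ []
  chain_adj : ∀ L ∈ ears, L.Chain' G.Adj
  shape : ∀ L ∈ ears, IsEarList L
  first_cycle : ∀ L ∈ ears.head?, IsCycleEarList L
  attach_ends : ∀ (i : ℕ) (hi : i < ears.length), 1 ≤ i →
      (∀ x ∈ (ears.get ⟨i, hi⟩).head?, x ∈ (ears.take i).flatten) ∧
      (∀ x ∈ (ears.get ⟨i, hi⟩).getLast?, x ∈ (ears.take i).flatten)
  attach_inner : ∀ (i : ℕ) (hi : i < ears.length), 1 ≤ i →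
      ∀ x ∈ (ears.get ⟨i, hi⟩).tail.dropLast, x ∉ (ears.take i).flatten
  edges_disjoint : ∀ (i j : ℕ) (hi : i < ears.length) (hj : j < ears.length), i ≠ j →
      Disjoint (earEdgeSet (ears.get ⟨i, hi⟩)) (earEdgeSet (ears.get ⟨j, hj⟩))
  edges_cover : ∀ e, e ∈ G.edgeSet ↔ ∃ L ∈ ears, e ∈ earEdgeSet L

/-- The number of even ears (ears with an even number of edges; in particular all
2-cycles) of a generalized ear decomposition.  An ear with vertex list `L` has
`L.length - 1` edges, so it is even iff `L.length` is odd. -/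
def evenEarCount {V : Type} {G : SimpleGraph V} (E : GenEarDecomp G) : ℕ :=
  (E.ears.filter (fun L => L.length % 2 == 1)).length

/-- `φ(G)`: the minimal number of even ears in a generalized ear decomposition of `G`. -/
noncomputable def phiGraph {V : Type} (G : SimpleGraph V) : ℕ :=
  sInf {m | ∃ E : GenEarDecomp G, evenEarCount E = m}

/-- `μ(G) = (φ(G) + v(G) - 1)/2` for a connected graph `G`. -/
noncomputable def muGraph {V : Type} (G : SimpleGraph V) : ℕ :=
  (phiGraph G + Nat.card V - 1) / 2

/-- A dominating set: every vertex outside `U` is adjacent to a vertex of `U`. -/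
def IsDominatingSet {V : Type} (G : SimpleGraph V) (U : Set V) : Prop :=
  ∀ v ∉ U, ∃ u ∈ U, G.Adj v u

/-- `(A,B)` is a bipartition of `G`. -/
def IsBipartitionOf {V : Type} (G : SimpleGraph V) (A B : Set V) : Prop :=
  (∀ v, v ∈ A ∨ v ∈ B) ∧ A ∩ B = ∅ ∧
    ∀ ⦃v w⦄, G.Adj v w → ((v ∈ A ∧ w ∈ B) ∨ (v ∈ B ∧ w ∈ A))

/-- `G` is bipartite. -/
def IsBipartiteGraph {V : Type} (G : SimpleGraph V) : Prop :=
  ∃ A B : Set V, IsBipartitionOf G A B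

/-- `G` is a complete bipartite graph. -/
def IsCompleteBipartite {V : Type} (G : SimpleGraph V) : Prop :=
  ∃ A B : Set V, IsBipartitionOf G A B ∧ ∀ a ∈ A, ∀ b ∈ B, G.Adj a b

open Classical in
/-- `s(G)` for a connected bipartite graph `G`: `0` if `G` is complete bipartite,
and otherwise the minimum of `μ(G_U)` over all dominating connected induced
subgraphs `G_U` of `G`. -/
noncomputable def sBip {V : Type} (G : SimpleGraph V) : ℕ :=
  if IsCompleteBipartite G then 0
  else sInf {m | ∃ U : Set V, IsDominatingSet G U ∧ (G.induce U).Connected ∧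
    muGraph (G.induce U) = m}

/-- A graph is strongly nonbipartite if every connected component is nonbipartite. -/
def StronglyNonbipartite {V : Type} (G : SimpleGraph V) : Prop :=
  ∀ c : G.ConnectedComponent, ¬ IsBipartiteGraph (G.induce c.supp)

/-- `φ*(G)` for a (strongly nonbipartite) graph `G`: the minimal total number of even
ears in generalized ear decompositions of the connected components of `G` whose first
ear in each component is an odd cycle. -/
noncomputable def phiStar {V : Type} (G : SimpleGraph V) : ℕ :=
  sInf {m | ∃ D : ∀ c : G.ConnectedComponent, GenEarDecomp (G.induce c.supp),
    (∀ c, ∀ L ∈ (D c).ears.head?, IsProperCycleList L ∧ L.length % 2 = 0) ∧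
    (∑ᶠ c, evenEarCount (D c)) = m}

/-- `μ*(G) = (φ*(G) + v(G) - c)/2` where `c` is the number of connected components. -/
noncomputable def muStar {V : Type} (G : SimpleGraph V) : ℕ :=
  (phiStar G + Nat.card V - Nat.card G.ConnectedComponent) / 2

/-- `s(G)` for a connected nonbipartite graph `G`: the minimum of `μ*(G_U)` over all
dominating strongly nonbipartite induced subgraphs `G_U` of `G`. -/
noncomputable def sNonbip {V : Type} (G : SimpleGraph V) : ℕ :=
  sInf {m | ∃ U : Set V, IsDominatingSet G U ∧ StronglyNonbipartite (G.induce U) ∧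
    muStar (G.induce U) = m}

open Classical in
/-- `s` of a connected component of a graph, according to whether the component
is bipartite or not. -/
noncomputable def sComp {V : Type} (G : SimpleGraph V) (c : G.ConnectedComponent) : ℕ :=
  if IsBipartiteGraph (G.induce c.supp) then sBip (G.induce c.supp)
  else sNonbip (G.induce c.supp)

/-- A vertex cover of `G`. -/
def IsVertexCover {V : Type} (G : SimpleGraph V) (C : Set V) : Prop :=
  ∀ ⦃v w⦄, G.Adj v w → v ∈ C ∨ w ∈ C

/-- A minimal vertex cover of `G`. -/
def IsMinimalVertexCover {V : Type} (G : SimpleGraph V) (C : Set V) : Prop :=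
  IsVertexCover G C ∧ ∀ D ⊆ C, IsVertexCover G D → D = C

/-- `a` is a solution of the system `(*)` associated with the connected bipartite
graph `G` with bipartition `(A,B)`:
`Σ_{i∈A} aᵢ = Σ_{i∈B} aᵢ` and `Σ_{i∈C} aᵢ > Σ_{i∈A} aᵢ` for every minimal vertex
cover `C ≠ A, B` of `G`. -/
def SolvesStar {V : Type} (G : SimpleGraph V) (A B : Set V) (a : V → ℕ) : Prop :=
  (∑ᶠ i ∈ A, a i) = (∑ᶠ i ∈ B, a i) ∧
  ∀ C : Set V, IsMinimalVertexCover G C → C ≠ A → C ≠ B →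
    (∑ᶠ i ∈ A, a i) < (∑ᶠ i ∈ C, a i)

/-- The parallelization `G^a` of `G`: each vertex `i` is replaced by `a i` copies
(`i` is deleted when `a i = 0`), two copies being adjacent iff the original
vertices are adjacent in `G`. -/
def parallelization {V : Type} (G : SimpleGraph V) (a : V → ℕ) :
    SimpleGraph (Σ i : V, Fin (a i)) where
  Adj x y := G.Adj x.1 y.1
  symm := ⟨fun _ _ h => G.adj_symm h⟩
  loopless := ⟨fun x h => G.irrefl h⟩

/-- A connected graph is matching-covered if it is not an isolated vertex and every
edge is contained in a perfect matching. -/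
def IsMatchingCovered {W : Type} (H : SimpleGraph W) : Prop :=
  H.Connected ∧ H.edgeSet.Nonempty ∧
    ∀ e ∈ H.edgeSet, ∃ M : H.Subgraph, M.IsPerfectMatching ∧ e ∈ M.edgeSet

/-- An independent set of `G`. -/
def IsIndependentSet {V : Type} (G : SimpleGraph V) (F : Set V) : Prop :=
  ∀ ⦃v⦄, v ∈ F → ∀ ⦃w⦄, w ∈ F → ¬ G.Adj v w

/-- A maximal independent set of `G`. -/
def IsMaxIndependentSet {V : Type} (G : SimpleGraph V) (F : Set V) : Prop :=
  IsIndependentSet G F ∧ ∀ F', IsIndependentSet G F' → F ⊆ F' → F' = F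

/-- The number of leaves (vertices of degree 1) of `G`. -/
noncomputable def leafCount {V : Type} (G : SimpleGraph V) : ℕ :=
  {v : V | (G.neighborSet v).ncard = 1}.ncard

/-!
Inside `G^a` a set `S` of vertices of `G` has `∑_{i ∈ S} aᵢ` copies, and the sides of `G^a`
are the copies of `A` and of `B`. The equation of `(*)` says that these sides have the same size.
Applied to the vertex cover `(A \ S) ∪ N(S)`, the inequalities of `(*)` say that
`|N(S)| > |S|` (counting copies) for every nonempty `S ⊆ A` that misses part of the support.
By Hall's theorem, this strict Hall condition is what puts each edge of `G^a` into a
perfect matching. Applied to both sides of a connected component, it also shows that `G^a`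
is connected. Conversely, take a perfect matching that contains an edge leaving the copies of
`S`. It maps these copies injectively into `N(S)` minus one vertex, which gives back the
strict inequalities for the minimal covers.
-/

variable {V W : Type}

def IsTotalDominatingSet (G : SimpleGraph V) (U : Set V) : Prop :=
  ∀ v, ∃ u ∈ U, G.Adj v u

lemma IsTotalDominatingSet.isDominatingSet {G : SimpleGraph V} {U : Set V}
    (h : IsTotalDominatingSet G U) : IsDominatingSet G U :=
  fun v _ => h v

lemma IsVertexCover.exists_isMinimalVertexCover_subset [Finite V] {G : SimpleGraph V}
    {C : Set V} (hC : IsVertexCover G C) : ∃ D ⊆ C, IsMinimalVertexCover G D := by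
  obtain ⟨D, hDC, hD⟩ := (Set.toFinite {D : Set V | IsVertexCover G D}).exists_le_minimal hC
  exact ⟨D, hDC, hD.prop, fun E hED hE => le_antisymm hED (hD.le_of_le hE hED)⟩

namespace IsBipartitionOf

variable {G : SimpleGraph V} {A B : Set V}

lemma symm (h : IsBipartitionOf G A B) : IsBipartitionOf G B A :=
  ⟨fun v => (h.1 v).symm, by rw [Set.inter_comm]; exact h.2.1, fun _ _ hvw => (h.2.2 hvw).symm⟩

lemma mem_right_iff (h : IsBipartitionOf G A B) {v : V} : v ∈ B ↔ v ∉ A :=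
  ⟨fun hB hA => (h.2.1 ▸ ⟨hA, hB⟩ : v ∈ (∅ : Set V)), (h.1 v).resolve_left⟩

lemma mem_right_of_adj (h : IsBipartitionOf G A B) {v w : V} (hv : v ∈ A)
    (hvw : G.Adj v w) : w ∈ B :=
  (h.2.2 hvw).elim And.right fun hv' => absurd hv (h.mem_right_iff.mp hv'.1)

lemma isVertexCover_left (h : IsBipartitionOf G A B) : IsVertexCover G A :=
  fun _ _ hvw => (h.2.2 hvw).imp And.left And.right

lemma isVertexCover_diff_union_neighborSet (h : IsBipartitionOf G A B) (S : Set V) :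
    IsVertexCover G (A \ S ∪ ⋃ i ∈ S, G.neighborSet i) := by
  have hside : ∀ ⦃v w⦄, G.Adj v w → v ∈ A → v ∈ A \ S ∨ w ∈ ⋃ i ∈ S, G.neighborSet i :=
    fun v _ hvw hv => (em (v ∈ S)).symm.imp (⟨hv, ·⟩) (Set.mem_biUnion · hvw)
  intro v w hvw
  rcases h.2.2 hvw with ⟨hv, -⟩ | ⟨-, hw⟩
  · exact (hside hvw hv).imp Or.inl Or.inr
  · exact ((hside hvw.symm hw).imp Or.inl Or.inr).symm

lemma isBipartiteWith (h : IsBipartitionOf G A B) : G.IsBipartiteWith A B :=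
  ⟨Set.disjoint_iff_inter_eq_empty.mpr h.2.1, h.2.2⟩

end IsBipartitionOf

section Matching

variable [Finite W] {H : SimpleGraph W} {X Y : Set W}

lemma SimpleGraph.Subgraph.IsMatching.ncard_le_ncard {M : H.Subgraph} (hM : M.IsMatching)
    {P Q : Set W} (hP : P ⊆ M.verts) (hPQ : ∀ v ∈ P, ∀ w, M.Adj v w → w ∈ Q) :
    P.ncard ≤ Q.ncard := by
  choose! f hf using fun v (hv : v ∈ P) => (hM (hP hv)).exists
  exact Set.ncard_le_ncard_of_injOn f (fun v hv => hPQ v hv _ (hf v hv))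
    fun v hv w hw hvw => hM.eq_of_adj_right (hf v hv) (hvw ▸ hf w hw)

lemma IsBipartitionOf.ncard_eq_of_isPerfectMatching (hbip : IsBipartitionOf H X Y)
    {M : H.Subgraph} (hM : M.IsPerfectMatching) : X.ncard = Y.ncard := by
  have hle : ∀ {X Y : Set W}, IsBipartitionOf H X Y → X.ncard ≤ Y.ncard := fun hXY =>
    hM.1.ncard_le_ncard (fun v _ => hM.2 v) fun _ hv _ hvw =>
      hXY.mem_right_of_adj hv (M.adj_sub hvw)
  exact le_antisymm (hle hbip) (hle hbip.symm)

lemma IsBipartitionOf.exists_isPerfectMatching_of_hall (hbip : IsBipartitionOf H X Y)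
    (hcard : X.ncard = Y.ncard)
    (hall : ∀ s ⊆ X, s.ncard ≤ (⋃ v ∈ s, H.neighborSet v).ncard) :
    ∃ M : H.Subgraph, M.IsPerfectMatching := by
  classical
  have := Fintype.ofFinite W
  obtain ⟨M, hXM, hM⟩ :=
    SimpleGraph.exists_isMatching_of_forall_ncard_le hbip.isBipartiteWith hall
  have hmatched : X.ncard ≤ (Y ∩ M.verts).ncard := hM.ncard_le_ncard hXM fun v hv w hvw =>
    ⟨hbip.mem_right_of_adj hv (M.adj_sub hvw), M.edge_vert hvw.symm⟩
  have hYM : Y ∩ M.verts = Y :=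
    Set.eq_of_subset_of_ncard_le Set.inter_subset_left (hcard ▸ hmatched)
  exact ⟨M, hM, fun v => (hbip.1 v).elim (hXM ·) (Set.inter_eq_left.mp hYM ·)⟩

lemma IsBipartitionOf.exists_isPerfectMatching_mem_edgeSet_of_hall
    (hbip : IsBipartitionOf H X Y) (hcard : X.ncard = Y.ncard) {x y : W} (hx : x ∈ X)
    (hxy : H.Adj x y)
    (hall : ∀ s ⊆ X \ {x}, s.ncard ≤ ((⋃ v ∈ s, H.neighborSet v) \ {y}).ncard) :
    ∃ M : H.Subgraph, M.IsPerfectMatching ∧ s(x, y) ∈ M.edgeSet := by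
  -- `H'` keeps the edge `xy` and drops every other edge at `x` or `y`, so a perfect matching
  -- of `H'` must use `xy`.
  let H' : SimpleGraph W :=
    { Adj u v := H.Adj u v ∧ (u = x ↔ v = y) ∧ (u = y ↔ v = x)
      symm := ⟨fun _ _ h => ⟨h.1.symm, h.2.2.symm, h.2.1.symm⟩⟩
      loopless := ⟨fun _ h => H.irrefl h.1⟩ }
  have hle : H' ≤ H := fun _ _ h => h.1
  have hy : y ∈ Y := hbip.mem_right_of_adj hx hxy
  have hbip' : IsBipartitionOf H' X Y := ⟨hbip.1, hbip.2.1, fun _ _ h => hbip.2.2 h.1⟩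
  have hall' : ∀ s ⊆ X, s.ncard ≤ (⋃ v ∈ s, H'.neighborSet v).ncard := by
    intro s hs
    set N := (⋃ v ∈ s \ {x}, H.neighborSet v) \ {y}
    have hN : N ⊆ ⋃ v ∈ s, H'.neighborSet v := by
      rintro w ⟨hw, hwy⟩
      obtain ⟨v, ⟨hvs, hvx⟩, hvw⟩ := Set.mem_iUnion₂.mp hw
      have hwY := hbip.mem_right_of_adj (hs hvs) hvw
      refine Set.mem_biUnion hvs ⟨hvw, iff_of_false hvx hwy, iff_of_false ?_ ?_⟩
      · exact fun hvy => hbip.mem_right_iff.mp (hvy ▸ hy) (hs hvs)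
      · exact fun hwx => hbip.mem_right_iff.mp hwY (hwx ▸ hx)
    have hsN : (s \ {x}).ncard ≤ N.ncard := hall _ (Set.sdiff_subset_sdiff_left hs)
    by_cases hxs : x ∈ s
    · have hxy' : H'.Adj x y := ⟨hxy, iff_of_true rfl rfl, iff_of_false hxy.ne hxy.ne.symm⟩
      calc s.ncard = (s \ {x}).ncard + 1 := (Set.ncard_sdiff_singleton_add_one hxs).symm
        _ ≤ N.ncard + 1 := by omega
        _ = (insert y N).ncard := (Set.ncard_insert_of_notMem fun h => h.2 rfl).symm
        _ ≤ _ := Set.ncard_le_ncard (Set.insert_subset (Set.mem_biUnion hxs hxy') hN)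
    · rw [Set.sdiff_singleton_eq_self hxs] at hsN
      exact hsN.trans (Set.ncard_le_ncard hN)
  obtain ⟨M', hM'⟩ := hbip'.exists_isPerfectMatching_of_hall hcard hall'
  obtain ⟨w, hxw, -⟩ := SimpleGraph.Subgraph.isPerfectMatching_iff.mp hM' x
  have hwy : w = y := (M'.adj_sub hxw).2.1.mp rfl
  exact ⟨M'.map (SimpleGraph.Hom.ofLE hle),
    ⟨hM'.1.map_ofLE hle, fun v => ⟨v, hM'.2 v, rfl⟩⟩, x, y, hwy ▸ hxw, rfl, rfl⟩

lemma IsMatchingCovered.ncard_lt_ncard_neighborSet (hmc : IsMatchingCovered H)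
    (hbip : IsBipartitionOf H X Y) {P : Set W} (hPX : P ⊆ X) (hP : P.Nonempty) {x : W}
    (hx : x ∈ X) (hxP : x ∉ P) :
    P.ncard < (⋃ v ∈ P, H.neighborSet v).ncard := by
  set N := ⋃ v ∈ P, H.neighborSet v
  have hxN : x ∉ P ∪ N := by
    rintro (hxP' | hxN)
    · exact hxP hxP'
    · obtain ⟨v, hv, hvx⟩ := Set.mem_iUnion₂.mp hxN
      exact hbip.mem_right_iff.mp (hbip.mem_right_of_adj (hPX hv) hvx) hx
  obtain ⟨p, q, hpq, hqN, hpP⟩ : ∃ p q, H.Adj p q ∧ q ∈ N ∧ p ∉ P := by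
    obtain ⟨v, hv⟩ := hP
    obtain ⟨d, -, hd, hd'⟩ :=
      (hmc.1.preconnected v x).some.exists_boundary_dart (P ∪ N) (Or.inl hv) hxN
    exact ⟨d.snd, d.fst, d.adj.symm,
      hd.resolve_left fun hP' => hd' (Or.inr (Set.mem_biUnion hP' d.adj)),
      fun hP' => hd' (Or.inl hP')⟩
  obtain ⟨M, hM, hpqM⟩ := hmc.2.2 s(p, q) hpq
  rw [SimpleGraph.Subgraph.mem_edgeSet] at hpqM
  have hle : P.ncard ≤ (N \ {q}).ncard := hM.1.ncard_le_ncard (fun v _ => hM.2 v)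
    fun v hv w hvw => ⟨Set.mem_biUnion hv (M.adj_sub hvw), fun hwq =>
      hpP (hM.1.eq_of_adj_right hpqM (Set.mem_singleton_iff.mp hwq ▸ hvw) ▸ hv)⟩
  exact hle.trans_lt (Set.ncard_sdiff_singleton_lt_of_mem hqN)

end Matching

def copies (a : V → ℕ) (S : Set V) : Set (Σ i : V, Fin (a i)) := Sigma.fst ⁻¹' S

section Copies

variable {a : V → ℕ}

lemma ncard_copies [Finite V] (S : Set V) :
    (copies a S).ncard = ∑ᶠ i ∈ S, a i := by
  have := Fintype.ofFinite S
  rw [← finsum_set_coe_eq_finsum_mem, finsum_eq_sum_of_fintype]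
  calc (copies a S).ncard = Nat.card (Σ i : S, Fin (a i)) :=
        Nat.card_congr (Equiv.subtypeSigmaEquiv (fun i => Fin (a i)) (· ∈ S))
    _ = ∑ i : S, a i := by simp

lemma ncard_copies_diff_add [Finite V] {S T : Set V} (hST : S ⊆ T) :
    (copies a (T \ S)).ncard + (copies a S).ncard = (copies a T).ncard :=
  Set.ncard_sdiff_add_ncard_of_subset (Set.preimage_mono hST)

lemma nonempty_sigma_fin_of_ne_zero (ha : a ≠ 0) : Nonempty (Σ i : V, Fin (a i)) :=
  let ⟨i, hi⟩ := Function.ne_iff.mp ha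
  ⟨⟨i, ⟨0, Nat.pos_of_ne_zero hi⟩⟩⟩

lemma IsTotalDominatingSet.exists_adj_copy {G : SimpleGraph V}
    (h : IsTotalDominatingSet G {i | a i ≠ 0}) (v : V) :
    ∃ z : Σ i : V, Fin (a i), G.Adj v z.1 :=
  let ⟨u, hu, hvu⟩ := h v
  ⟨⟨u, ⟨0, Nat.pos_of_ne_zero hu⟩⟩, hvu⟩

lemma IsTotalDominatingSet.exists_eq_or_adj_mem_left {G : SimpleGraph V} {A B : Set V}
    (hdom : IsTotalDominatingSet G {i | a i ≠ 0}) (hbip : IsBipartitionOf G A B)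
    (w : Σ i : V, Fin (a i)) :
    ∃ w' : Σ i : V, Fin (a i), (w' = w ∨ G.Adj w.1 w'.1) ∧ w'.1 ∈ A := by
  by_cases hw : w.1 ∈ A
  · exact ⟨w, Or.inl rfl, hw⟩
  · obtain ⟨u, hu⟩ := hdom.exists_adj_copy w.1
    exact ⟨u, Or.inr hu, hbip.symm.mem_right_of_adj (hbip.mem_right_iff.mpr hw) hu⟩

lemma IsBipartitionOf.parallelization {G : SimpleGraph V} {A B : Set V}
    (h : IsBipartitionOf G A B) (a : V → ℕ) :
    IsBipartitionOf (parallelization G a) (copies a A) (copies a B) :=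
  ⟨fun z => h.1 z.1, by rw [copies, copies, ← Set.preimage_inter, h.2.1, Set.preimage_empty],
    fun _ _ hzw => h.2.2 hzw⟩

end Copies

namespace SolvesStar

variable {G : SimpleGraph V} {A B : Set V} {a : V → ℕ}

lemma symm (hs : SolvesStar G A B a) : SolvesStar G B A a :=
  ⟨hs.1.symm, fun C hC hCB hCA => hs.1 ▸ hs.2 C hC hCA hCB⟩

variable [Finite V]

lemma ncard_copies_eq (hs : SolvesStar G A B a) : (copies a A).ncard = (copies a B).ncard := by
  simpa only [ncard_copies] using hs.1

lemma ncard_copies_lt_of_isVertexCover (hs : SolvesStar G A B a) {C : Set V}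
    (hC : IsVertexCover G C) (hA : ¬A ⊆ C) (hB : ¬B ⊆ C) :
    (copies a A).ncard < (copies a C).ncard := by
  obtain ⟨D, hDC, hD⟩ := hC.exists_isMinimalVertexCover_subset
  have hlt := hs.2 D hD (by rintro rfl; exact hA hDC) (by rintro rfl; exact hB hDC)
  rw [← ncard_copies, ← ncard_copies] at hlt
  exact hlt.trans_le (Set.ncard_le_ncard (Set.preimage_mono hDC))

lemma ncard_copies_lt_or_subset_neighborSet (hbip : IsBipartitionOf G A B)
    (hs : SolvesStar G A B a) {S : Set V} (hSA : S ⊆ A) (hS : S.Nonempty) :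
    (copies a S).ncard < (copies a (⋃ i ∈ S, G.neighborSet i)).ncard ∨
      B ⊆ ⋃ i ∈ S, G.neighborSet i := by
  set N := ⋃ i ∈ S, G.neighborSet i
  refine or_iff_not_imp_right.mpr fun hBN => ?_
  have hNB : N ⊆ B := fun w hw =>
    let ⟨_, hv, hvw⟩ := Set.mem_iUnion₂.mp hw
    hbip.mem_right_of_adj (hSA hv) hvw
  have hA : ¬A ⊆ A \ S ∪ N := fun hA =>
    let ⟨v, hv⟩ := hS
    (hA (hSA hv)).elim (fun h => h.2 hv) fun h => hbip.mem_right_iff.mp (hNB h) (hSA hv)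
  have hB : ¬B ⊆ A \ S ∪ N := fun hB => hBN fun b hb =>
    (hB hb).resolve_left fun h => hbip.mem_right_iff.mp hb h.1
  have hlt : (copies a A).ncard < (copies a (A \ S ∪ N)).ncard :=
    hs.ncard_copies_lt_of_isVertexCover (hbip.isVertexCover_diff_union_neighborSet S) hA hB
  have hunion : (copies a (A \ S ∪ N)).ncard ≤ (copies a (A \ S)).ncard + (copies a N).ncard :=
    Set.ncard_union_le _ _
  have hsplit := ncard_copies_diff_add (a := a) hSA
  omega

lemma ncard_copies_lt_ncard_copies_neighborSet (hbip : IsBipartitionOf G A B)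
    (hs : SolvesStar G A B a) {S : Set V} (hSA : S ⊆ A) (hS : S.Nonempty) {t : V}
    (htA : t ∈ A) (htS : t ∉ S) (ht : a t ≠ 0) :
    (copies a S).ncard < (copies a (⋃ i ∈ S, G.neighborSet i)).ncard := by
  rcases hs.ncard_copies_lt_or_subset_neighborSet hbip hSA hS with hlt | hB
  · exact hlt
  have hBN : (copies a B).ncard ≤ (copies a (⋃ i ∈ S, G.neighborSet i)).ncard :=
    Set.ncard_le_ncard (Set.preimage_mono hB)
  have hsplit := ncard_copies_diff_add (a := a) hSA
  have htS : 0 < (copies a (A \ S)).ncard :=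
    (Set.ncard_pos).mpr ⟨⟨t, ⟨0, Nat.pos_of_ne_zero ht⟩⟩, htA, htS⟩
  have := hs.ncard_copies_eq
  omega

lemma isTotalDominatingSet (hbip : IsBipartitionOf G A B) (hs : SolvesStar G A B a)
    (ha : a ≠ 0) : IsTotalDominatingSet G {i | a i ≠ 0} := by
  intro v
  wlog hv : v ∈ A generalizing A B
  · exact this hbip.symm hs.symm (hbip.mem_right_iff.mpr hv)
  by_contra! hno
  have hN : copies a (⋃ i ∈ ({v} : Set V), G.neighborSet i) = ∅ :=
    Set.eq_empty_of_forall_notMem fun z hz =>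
      hno z.1 z.2.pos.ne' (by simpa [copies] using hz)
  rcases hs.ncard_copies_lt_or_subset_neighborSet hbip (Set.singleton_subset_iff.mpr hv)
    (Set.singleton_nonempty v) with hlt | hB
  · rw [hN, Set.ncard_empty] at hlt
    exact absurd hlt (Nat.not_lt_zero _)
  · have hcB : copies a B = ∅ := Set.subset_eq_empty (Set.preimage_mono hB) hN
    have hcA : copies a A = ∅ := by
      rw [← Set.ncard_eq_zero, hs.ncard_copies_eq, hcB, Set.ncard_empty]
    obtain ⟨z⟩ := nonempty_sigma_fin_of_ne_zero ha
    exact (hbip.parallelization a).1 z |>.elim (hcA.subset ·) (hcB.subset ·)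

lemma connected_parallelization (hbip : IsBipartitionOf G A B) (hs : SolvesStar G A B a)
    (ha : a ≠ 0) : (parallelization G a).Connected := by
  have := nonempty_sigma_fin_of_ne_zero ha
  have hdom := hs.isTotalDominatingSet hbip ha
  refine SimpleGraph.Connected.mk fun z₀ z => ?_
  by_contra hz
  set R := {w | (parallelization G a).Reachable z₀ w}
  have hR : ∀ {w w' : Σ i : V, Fin (a i)}, w ∈ R → G.Adj w.1 w'.1 → w' ∈ R :=
    fun hw h => hw.trans (SimpleGraph.Adj.reachable h)
  set U := Sigma.fst '' R
  have hUR : ∀ {w : Σ i : V, Fin (a i)}, w.1 ∈ U → w ∈ R := by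
    rintro w ⟨w', hw', hww'⟩
    obtain ⟨u, hu⟩ := hdom.exists_adj_copy w.1
    exact hR (hR hw' (hww' ▸ hu)) hu.symm
  have hlt : ∀ {A B : Set V}, IsBipartitionOf G A B → SolvesStar G A B a →
      (copies a (U ∩ A)).ncard < (copies a (U ∩ B)).ncard := by
    intro A B hbip hs
    obtain ⟨w₀, hw₀, hw₀A⟩ := hdom.exists_eq_or_adj_mem_left hbip z₀
    obtain ⟨w₁, hw₁, hw₁A⟩ := hdom.exists_eq_or_adj_mem_left hbip z
    have hw₀R : w₀ ∈ R := by
      rcases hw₀ with rfl | h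
      exacts [SimpleGraph.Reachable.refl _, hR (SimpleGraph.Reachable.refl _) h]
    have hw₁U : w₁.1 ∉ U := by
      refine fun h => hz ?_
      rcases hw₁ with rfl | h'
      exacts [hUR h, hR (hUR h) h'.symm]
    refine (hs.ncard_copies_lt_ncard_copies_neighborSet hbip (S := U ∩ A)
      Set.inter_subset_right ⟨w₀.1, ⟨w₀, hw₀R, rfl⟩, hw₀A⟩ hw₁A
      (fun h => hw₁U h.1) w₁.2.pos.ne').trans_le (Set.ncard_le_ncard fun w hw => ?_)
    obtain ⟨i, ⟨⟨w', hw'R, rfl⟩, hiA⟩, hiw⟩ := Set.mem_iUnion₂.mp hw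
    exact ⟨⟨w, hR hw'R hiw, rfl⟩, hbip.mem_right_of_adj hiA hiw⟩
  exact lt_asymm (hlt hbip hs) (hlt hbip.symm hs.symm)

lemma exists_isPerfectMatching_mem_edgeSet (hbip : IsBipartitionOf G A B)
    (hs : SolvesStar G A B a) (ha : a ≠ 0) {x y : Σ i : V, Fin (a i)}
    (hxy : (parallelization G a).Adj x y) :
    ∃ M : (parallelization G a).Subgraph, M.IsPerfectMatching ∧ s(x, y) ∈ M.edgeSet := by
  wlog hx : x.1 ∈ A generalizing A B
  · exact this hbip.symm hs.symm (hbip.mem_right_iff.mpr hx)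
  have hdom := hs.isTotalDominatingSet hbip ha
  refine (hbip.parallelization a).exists_isPerfectMatching_mem_edgeSet_of_hall
    hs.ncard_copies_eq hx hxy fun s hsX => ?_
  set S := Sigma.fst '' s
  have hN : ⋃ v ∈ s, (parallelization G a).neighborSet v =
      copies a (⋃ i ∈ S, G.neighborSet i) := by
    ext w
    simp [S, copies, parallelization]
  rw [hN]
  refine le_trans ?_ (Set.pred_ncard_le_ncard_sdiff_singleton _ _)
  have hSA : S ⊆ A := by
    rintro _ ⟨v, hv, rfl⟩
    exact (hsX hv).1
  by_cases hAS : A ∩ {i | a i ≠ 0} ⊆ S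
  · have hB : copies a B ⊆ copies a (⋃ i ∈ S, G.neighborSet i) := by
      intro w hw
      obtain ⟨u, hu⟩ := hdom.exists_adj_copy w.1
      have huA : u.1 ∈ A := hbip.symm.mem_right_of_adj hw hu
      exact Set.mem_biUnion (hAS ⟨huA, u.2.pos.ne'⟩) hu.symm
    have hsA : s.ncard ≤ (copies a A).ncard - 1 :=
      (Set.ncard_le_ncard hsX).trans
        (Set.ncard_sdiff_singleton_of_mem (s := copies a A) hx).le
    have := Set.ncard_le_ncard hB
    have := hs.ncard_copies_eq
    omega
  · obtain ⟨t, ⟨htA, ht⟩, htS⟩ := Set.not_subset.mp hAS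
    rcases s.eq_empty_or_nonempty with rfl | hs'
    · simp
    have hsS : s.ncard ≤ (copies a S).ncard := Set.ncard_le_ncard fun v hv => ⟨v, hv, rfl⟩
    have := hs.ncard_copies_lt_ncard_copies_neighborSet hbip hSA (hs'.image _) htA htS ht
    omega

end SolvesStar

namespace IsMatchingCovered

variable {G : SimpleGraph V} {A B : Set V} {a : V → ℕ}

lemma exists_isPerfectMatching {H : SimpleGraph W} (hmc : IsMatchingCovered H) :
    ∃ M : H.Subgraph, M.IsPerfectMatching :=
  let ⟨e, he⟩ := hmc.2.1
  let ⟨M, hM, _⟩ := hmc.2.2 e he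
  ⟨M, hM⟩

lemma isTotalDominatingSet (hmc : IsMatchingCovered (parallelization G a))
    (hdom : IsDominatingSet G {i | a i ≠ 0}) : IsTotalDominatingSet G {i | a i ≠ 0} := by
  intro v
  by_cases hv : a v = 0
  · exact hdom v (by simpa using hv)
  · obtain ⟨M, hM⟩ := hmc.exists_isPerfectMatching
    obtain ⟨z, hz, -⟩ :=
      SimpleGraph.Subgraph.isPerfectMatching_iff.mp hM ⟨v, ⟨0, Nat.pos_of_ne_zero hv⟩⟩
    exact ⟨z.1, z.2.pos.ne', M.adj_sub hz⟩

lemma ncard_copies_lt_of_isMinimalVertexCover [Finite V]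
    (hmc : IsMatchingCovered (parallelization G a)) (hbip : IsBipartitionOf G A B)
    (hdom : IsTotalDominatingSet G {i | a i ≠ 0}) {C : Set V} (hC : IsMinimalVertexCover G C)
    (hCA : C ≠ A) (hCB : C ≠ B) : (copies a A).ncard < (copies a C).ncard := by
  have hinter : (copies a A ∩ copies a C).Nonempty := by
    by_contra hempty
    refine hCB (hC.2 B (fun b hb => ?_) hbip.symm.isVertexCover_left).symm
    by_contra hbC
    obtain ⟨u, hu⟩ := hdom.exists_adj_copy b
    exact hempty ⟨u, hbip.symm.mem_right_of_adj hb hu, (hC.1 hu).resolve_left hbC⟩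
  have hdiff : (copies a A \ copies a C).ncard < (copies a C \ copies a A).ncard := by
    have hcross : ∀ {v w : V}, v ∈ A → v ∉ C → G.Adj v w → w ∈ C ∧ w ∉ A :=
      fun hvA hvC hvw => ⟨(hC.1 hvw).resolve_left hvC,
        hbip.mem_right_iff.mp (hbip.mem_right_of_adj hvA hvw)⟩
    rcases (copies a A \ copies a C).eq_empty_or_nonempty with hP | hP
    · obtain ⟨v, hvA, hvC⟩ : ∃ v ∈ A, v ∉ C := Set.not_subset.mp fun hAC =>
        hCA (hC.2 A hAC hbip.isVertexCover_left).symm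
      obtain ⟨u, hu⟩ := hdom.exists_adj_copy v
      rw [hP, Set.ncard_empty]
      exact (Set.ncard_pos).mpr ⟨u, hcross hvA hvC hu⟩
    · obtain ⟨x, hxA, hxC⟩ := hinter
      refine (hmc.ncard_lt_ncard_neighborSet (hbip.parallelization a) Set.sdiff_subset hP hxA
        fun h => h.2 hxC).trans_le (Set.ncard_le_ncard fun w hw => ?_)
      obtain ⟨v, ⟨hvA, hvC⟩, hvw⟩ := Set.mem_iUnion₂.mp hw
      exact hcross hvA hvC hvw
  have hAsplit := Set.ncard_inter_add_ncard_sdiff_eq_ncard (copies a A) (copies a C)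
  have hCsplit := Set.ncard_inter_add_ncard_sdiff_eq_ncard (copies a C) (copies a A)
  rw [Set.inter_comm] at hCsplit
  omega

end IsMatchingCovered

theorem solvesStar_iff_matchingCovered_general {n : ℕ}
    (G : SimpleGraph (Fin n)) (A B : Set (Fin n))
    (hbip : IsBipartitionOf G A B) (a : Fin n → ℕ) (ha : a ≠ 0) :
    SolvesStar G A B a ↔
      IsDominatingSet G {i | a i ≠ 0} ∧ IsMatchingCovered (parallelization G a) := by
  constructor
  · intro hs
    have hdom := hs.isTotalDominatingSet hbip ha
    obtain ⟨z⟩ := nonempty_sigma_fin_of_ne_zero ha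
    obtain ⟨w, hzw⟩ := hdom.exists_adj_copy z.1
    refine ⟨hdom.isDominatingSet, hs.connected_parallelization hbip ha, ⟨s(z, w), hzw⟩, ?_⟩
    rintro ⟨x, y⟩ hxy
    exact hs.exists_isPerfectMatching_mem_edgeSet hbip ha hxy
  · rintro ⟨hdom, hmc⟩
    obtain ⟨M, hM⟩ := hmc.exists_isPerfectMatching
    refine ⟨?_, fun C hC hCA hCB => ?_⟩ <;> rw [← ncard_copies, ← ncard_copies]
    · exact (hbip.parallelization a).ncard_eq_of_isPerfectMatching hM
    · exact hmc.ncard_copies_lt_of_isMinimalVertexCover hbip (hmc.isTotalDominatingSet hdom)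
        hC hCA hCB

/-- **Theorem.** For a connected bipartite graph `G` with bipartition `(A,B)`, a vector
`a ≠ 0` is a solution of `(*)` iff `supp(a)` is a dominating set of `G` and the
parallelization `G^a` is matching-covered. -/
theorem solvesStar_iff_matchingCovered {n : ℕ}
    (G : SimpleGraph (Fin n)) (A B : Set (Fin n))
    (hconn : G.Connected) (hbip : IsBipartitionOf G A B) (a : Fin n → ℕ) (ha : a ≠ 0) :
    SolvesStar G A B a ↔
      IsDominatingSet G {i | a i ≠ 0} ∧ IsMatchingCovered (parallelization G a) :=
  solvesStar_iff_matchingCovered_general G A B hbip a ha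
end

section
/- Let G be a connected bipartite graph on n vertices with vertex set V = {1,…,n}, and let a ∈ ℕ^n with supp(a) = V be such that the parallelization G^a is a matching-covered graph. Then |a| ≥ φ(G) + n − 1. -/
open MvPolynomial

/-!
A perfect matching of `G^a` through copies of an edge `ij` projects to a perfect `a`-matching `m`
of `G` (edge multiplicities with degrees `a`) with `m i j > 0`. Fix one such `m` and grow a
generalized ear decomposition greedily from a 2-cycle on an `m`-positive edge, keeping
`#even ears + #vertices ≤ 1 + (m-mass of the covered edges, counted at both ends)`.
An uncovered edge `uv` at a covered vertex `u` becomes a one-edge ear if `v` is covered, and a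
2-cycle if `m u v > 0`. Otherwise take a perfect `a`-matching `m'` with `m' u v > 0`: as `m' - m`
has zero row sums and `G` is bipartite, the walk from `v` alternating between edges with `m > m'`
and `m' > m` must return to the covered vertices, and a shortest such walk is an ear whose new
vertices all lie on `m`-positive ear edges and which, if even, reaches the old vertices through an
`m`-positive edge. When every edge is covered the mass is `∑ aᵢ`, so `φ(G) + n ≤ |a| + 1`.
-/

theorem Bool.eq_of_ne_of_ne {a b c : Bool} (hab : a ≠ b) (hca : c ≠ a) : c = b := by
  cases a <;> cases b <;> cases c <;> simp_all

namespace List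

variable {α : Type*}

theorem exists_nodup_isChain_of_reflTransGen {r : α → α → Prop} {a b : α}
    (h : Relation.ReflTransGen r a b) (hab : a ≠ b) :
    ∃ l, (a :: (l ++ [b])).IsChain r ∧ (a :: (l ++ [b])).Nodup := by
  induction h using Relation.ReflTransGen.head_induction_on with
  | refl => exact absurd rfl hab
  | head had hdb ih =>
    rename_i a d
    by_cases hdb' : d = b
    · subst hdb'
      exact ⟨[], isChain_pair.mpr had, by simpa using hab⟩
    obtain ⟨l, hchain, hnodup⟩ := ih hdb'
    by_cases ha : a ∈ d :: (l ++ [b])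
    · have ha' : a ∈ d :: l := by simpa [hab] using ha
      obtain ⟨l₁, l₂, hsplit⟩ := append_of_mem ha'
      have hsuffix : a :: (l₂ ++ [b]) <:+ d :: (l ++ [b]) :=
        ⟨l₁, by rw [show d :: (l ++ [b]) = d :: l ++ [b] from rfl, hsplit]; simp⟩
      exact ⟨l₂, hchain.suffix hsuffix, hnodup.sublist hsuffix.sublist⟩
    · exact ⟨d :: l, hchain.cons_cons had, nodup_cons.mpr ⟨ha, hnodup⟩⟩

theorem IsChain.bool_eq_iff_odd_length {c : α → Bool} :
    ∀ {a b : α} {l : List α}, (a :: (l ++ [b])).IsChain (fun x y => c x ≠ c y) →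
      (c b = c a ↔ Odd l.length)
  | _, _, [], h => by simpa [eq_comm] using isChain_pair.mp h
  | a, b, x :: l, h => by
    have hax := (isChain_cons_cons.mp h).1
    rw [length_cons, Nat.odd_add_one, ← (isChain_cons_cons.mp h).2.bool_eq_iff_odd_length]
    exact ⟨fun hba hbx => hax (hba.symm.trans hbx), Bool.eq_of_ne_of_ne (Ne.symm hax)⟩

end List

section Ears

variable {V : Type}

theorem earEdgeSet_singleton (a : V) : earEdgeSet [a] = ∅ := by
  simp [earEdgeSet]

theorem earEdgeSet_cons_cons (a b : V) (l : List V) :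
    earEdgeSet (a :: b :: l) = insert s(a, b) (earEdgeSet (b :: l)) := by
  ext e
  simp [earEdgeSet]

theorem earEdgeSet_subset_cons_cons (a b : V) (l : List V) :
    earEdgeSet (b :: l) ⊆ earEdgeSet (a :: b :: l) := by
  rw [earEdgeSet_cons_cons]
  exact Set.subset_insert _ _

theorem mem_of_mem_earEdgeSet {L : List V} {e : Sym2 V} (he : e ∈ earEdgeSet L) {v : V}
    (hv : v ∈ e) : v ∈ L := by
  obtain ⟨⟨x, y⟩, hp, rfl⟩ := he
  have := List.of_mem_zip hp
  rcases Sym2.mem_iff.mp hv with rfl | rfl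
  · exact this.1
  · exact List.mem_of_mem_tail this.2

theorem earEdgeSet_subset_edgeSet {G : SimpleGraph V} :
    ∀ {L : List V}, L.IsChain G.Adj → earEdgeSet L ⊆ G.edgeSet
  | [], _ => by simp [earEdgeSet]
  | [_], _ => by simp [earEdgeSet_singleton]
  | a :: b :: l, h => by
    rw [earEdgeSet_cons_cons]
    exact Set.insert_subset (List.isChain_cons_cons.mp h).1
      (earEdgeSet_subset_edgeSet (List.isChain_cons_cons.mp h).2)

theorem exists_rel_mem_earEdgeSet_of_mem {r : V → V → Prop} {b w : V} :
    ∀ {l : List V}, (l ++ [b]).IsChain r → w ∈ l →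
      ∃ y, r w y ∧ s(w, y) ∈ earEdgeSet (l ++ [b])
  | [], _, hw => by simp at hw
  | a :: l, h, hw => by
    obtain ⟨y, t, hyt⟩ : ∃ y t, l ++ [b] = y :: t := List.exists_cons_of_ne_nil (by simp)
    have hedges : earEdgeSet (a :: l ++ [b]) = insert s(a, y) (earEdgeSet (l ++ [b])) := by
      rw [List.cons_append, hyt, earEdgeSet_cons_cons]
    have hchain := List.isChain_cons.mp h
    rw [hedges]
    rcases List.mem_cons.mp hw with rfl | hw
    · exact ⟨y, hchain.1 y (by simp [hyt]), Set.mem_insert _ _⟩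
    · obtain ⟨y', hr, hy'⟩ := exists_rel_mem_earEdgeSet_of_mem hchain.2 hw
      exact ⟨y', hr, Set.mem_insert_of_mem _ hy'⟩

theorem exists_rel_mem_earEdgeSet_of_mem_tail {r : V → V → Prop} {w : V} :
    ∀ {a : V} {l : List V}, (a :: l).IsChain r → w ∈ l →
      ∃ p, r p w ∧ s(p, w) ∈ earEdgeSet (a :: l)
  | _, [], _, hw => by simp at hw
  | a, b :: l, h, hw => by
    rcases List.mem_cons.mp hw with rfl | hw
    · exact ⟨a, (List.isChain_cons_cons.mp h).1, by rw [earEdgeSet_cons_cons]; simp⟩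
    · obtain ⟨p, hr, hp⟩ := exists_rel_mem_earEdgeSet_of_mem_tail (List.isChain_cons_cons.mp h).2 hw
      exact ⟨p, hr, earEdgeSet_subset_cons_cons _ _ _ hp⟩

theorem exists_mem_of_mem_earEdgeSet {u z : V} :
    ∀ {ins : List V}, ins ≠ [] → ∀ {e : Sym2 V}, e ∈ earEdgeSet (u :: (ins ++ [z])) →
      ∃ w ∈ ins, w ∈ e
  | [], h, _, _ => absurd rfl h
  | [w], _, e, he => by
    simp only [List.cons_append, List.nil_append, earEdgeSet_cons_cons, earEdgeSet_singleton,
      Set.mem_insert_iff] at he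
    rcases he with rfl | rfl | h
    · exact ⟨w, by simp, Sym2.mem_mk_right _ _⟩
    · exact ⟨w, by simp, Sym2.mem_mk_left _ _⟩
    · simp at h
  | w :: w' :: ins, _, e, he => by
    rw [List.cons_append, earEdgeSet_cons_cons] at he
    rcases he with rfl | he
    · exact ⟨w, by simp, Sym2.mem_mk_right _ _⟩
    · obtain ⟨x, hx, hxe⟩ := exists_mem_of_mem_earEdgeSet (u := w) (List.cons_ne_nil _ _) he
      exact ⟨x, List.mem_cons_of_mem _ hx, hxe⟩

theorem isEarList_cons_append {u z : V} {ins : List V} (hu : u ∉ ins) (hz : z ∉ ins)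
    (hins : ins.Nodup) (hzu : z = u → ins ≠ []) : IsEarList (u :: (ins ++ [z])) := by
  by_cases h : z = u
  · subst h
    match ins, hzu rfl with
    | [v], _ => exact Or.inr (Or.inr ⟨z, v, by simpa [eq_comm] using hu, rfl⟩)
    | v :: w :: ins, _ =>
      refine Or.inr (Or.inl ⟨by simp, by rw [← List.cons_append, List.getLast?_concat]; rfl, ?_⟩)
      rw [← List.cons_append, List.dropLast_concat]
      exact List.nodup_cons.mpr ⟨hu, hins⟩
  · refine Or.inl ⟨by simp, ?_⟩
    rw [← List.cons_append, List.nodup_append]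
    refine ⟨List.nodup_cons.mpr ⟨hu, hins⟩, List.nodup_singleton _, ?_⟩
    intro x hx y hy
    rw [List.mem_singleton.mp hy]
    rcases List.mem_cons.mp hx with rfl | hx
    · exact Ne.symm h
    · rintro rfl
      exact hz hx

end Ears

section EarSequence

variable {V : Type}

def coveredEdges (ears : List (List V)) : Set (Sym2 V) := {e | ∃ L ∈ ears, e ∈ earEdgeSet L}

theorem earEdgeSet_subset_coveredEdges {ears : List (List V)} {L : List V} (hL : L ∈ ears) :
    earEdgeSet L ⊆ coveredEdges ears :=
  fun _ he => ⟨L, hL, he⟩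

theorem coveredEdges_append_singleton (ears : List (List V)) (L : List V) :
    coveredEdges (ears ++ [L]) = coveredEdges ears ∪ earEdgeSet L := by
  ext e
  simp [coveredEdges, or_and_right, exists_or]

def numEvenEars (ears : List (List V)) : ℕ := (ears.filter fun L => L.length % 2 == 1).length

theorem numEvenEars_append_singleton (ears : List (List V)) (L : List V) :
    numEvenEars (ears ++ [L]) = numEvenEars ears + L.length % 2 := by
  rcases Nat.mod_two_eq_zero_or_one L.length with h | h <;> simp [numEvenEars, h]

def AttachesTo (F L : List V) : Prop :=
  (∀ x ∈ L.head?, x ∈ F) ∧ (∀ x ∈ L.getLast?, x ∈ F) ∧ ∀ x ∈ L.tail.dropLast, x ∉ F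

inductive IsEarSequence (G : SimpleGraph V) : List (List V) → Prop
  | single {L : List V} : L.IsChain G.Adj → IsCycleEarList L → IsEarSequence G [L]
  | snoc {ears : List (List V)} {L : List V} : IsEarSequence G ears → L.IsChain G.Adj →
      IsEarList L → AttachesTo ears.flatten L → Disjoint (coveredEdges ears) (earEdgeSet L) →
      IsEarSequence G (ears ++ [L])

namespace IsEarSequence

variable {G : SimpleGraph V} {ears : List (List V)}

theorem ne_nil (h : IsEarSequence G ears) : ears ≠ [] := by
  cases h <;> simp

theorem isChain_and_isEarList (h : IsEarSequence G ears) :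
    ∀ L ∈ ears, L.IsChain G.Adj ∧ IsEarList L := by
  induction h with
  | single hL hcyc => simpa using ⟨hL, Or.inr hcyc⟩
  | snoc _ hL hear _ _ ih =>
    intro L' hL'
    rcases List.mem_append.mp hL' with h | h
    · exact ih L' h
    · rw [List.mem_singleton.mp h]
      exact ⟨hL, hear⟩

theorem head_isCycleEarList (h : IsEarSequence G ears) : ∀ L ∈ ears.head?, IsCycleEarList L := by
  induction h with
  | single _ hcyc => simpa using hcyc
  | snoc h _ _ _ _ ih => rwa [List.head?_append_of_ne_nil _ h.ne_nil]

theorem attachesTo_take (h : IsEarSequence G ears) :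
    ∀ (i : ℕ) (hi : i < ears.length), 1 ≤ i → AttachesTo (ears.take i).flatten ears[i] := by
  induction h with
  | single _ _ =>
    intro i hi h1
    simp only [List.length_singleton] at hi
    omega
  | @snoc ears L _ _ _ hatt _ ih =>
    intro i hi h1
    rw [List.length_append, List.length_singleton] at hi
    rcases Nat.lt_succ_iff_lt_or_eq.mp hi with hi | rfl
    · rw [List.getElem_append_left hi, List.take_append_of_le_length hi.le]
      exact ih i hi h1
    · simpa using hatt

theorem pairwise_disjoint (h : IsEarSequence G ears) :
    ears.Pairwise fun L L' => Disjoint (earEdgeSet L) (earEdgeSet L') := by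
  induction h with
  | single _ _ => exact List.pairwise_singleton _ _
  | snoc _ _ _ _ hdisj ih =>
    refine List.pairwise_append.mpr ⟨ih, List.pairwise_singleton _ _, ?_⟩
    intro L₁ hL₁ L₂ hL₂
    rw [List.mem_singleton.mp hL₂]
    exact hdisj.mono_left (earEdgeSet_subset_coveredEdges hL₁)

def toGenEarDecomp (h : IsEarSequence G ears) (hcov : G.edgeSet ⊆ coveredEdges ears) :
    GenEarDecomp G where
  ears := ears
  ears_nonempty := h.ne_nil
  chain_adj L hL := (h.isChain_and_isEarList L hL).1
  shape L hL := (h.isChain_and_isEarList L hL).2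
  first_cycle := h.head_isCycleEarList
  attach_ends i hi h1 := ⟨(h.attachesTo_take i hi h1).1, (h.attachesTo_take i hi h1).2.1⟩
  attach_inner i hi h1 := (h.attachesTo_take i hi h1).2.2
  edges_disjoint i j hi hj hij := by
    rcases Nat.lt_or_gt_of_ne hij with hlt | hlt
    · exact List.pairwise_iff_getElem.mp h.pairwise_disjoint i j hi hj hlt
    · exact (List.pairwise_iff_getElem.mp h.pairwise_disjoint j i hj hi hlt).symm
  edges_cover _ := ⟨fun he => hcov he, by
    rintro ⟨L, hL, he⟩
    exact earEdgeSet_subset_edgeSet (h.isChain_and_isEarList L hL).1 he⟩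

theorem phiGraph_le (h : IsEarSequence G ears) (hcov : G.edgeSet ⊆ coveredEdges ears) :
    phiGraph G ≤ numEvenEars ears :=
  Nat.sInf_le ⟨h.toGenEarDecomp hcov, rfl⟩

end IsEarSequence

end EarSequence

section BMatching

variable {V : Type}

structure IsPerfectBMatching [Fintype V] (G : SimpleGraph V) (b : V → ℕ) (m : V → V → ℕ) :
    Prop where
  symm : ∀ i j, m i j = m j i
  adj_of_ne_zero : ∀ i j, m i j ≠ 0 → G.Adj i j
  sum_eq : ∀ i, ∑ j, m i j = b i

open Classical in
noncomputable def coveredMass [Fintype V] (m : V → V → ℕ) (C : Set (Sym2 V)) (i : V) : ℕ :=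
  ∑ j, if s(i, j) ∈ C then m i j else 0

section CoveredMass

variable [Fintype V] {m : V → V → ℕ} {C C' : Set (Sym2 V)} {i j : V}

theorem coveredMass_mono (h : C ⊆ C') (i : V) : coveredMass m C i ≤ coveredMass m C' i := by
  unfold coveredMass
  refine Finset.sum_le_sum fun j _ => ?_
  split_ifs with h₁ h₂ h₂
  exacts [le_rfl, absurd (h h₁) h₂, Nat.zero_le _, le_rfl]

theorem coveredMass_add_le (h : C ⊆ C') (hj : s(i, j) ∉ C) (hj' : s(i, j) ∈ C') :
    coveredMass m C i + m i j ≤ coveredMass m C' i := by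
  classical
  unfold coveredMass
  rw [← Finset.add_sum_erase _ _ (Finset.mem_univ j),
    ← Finset.add_sum_erase _ _ (Finset.mem_univ j), if_neg hj, if_pos hj', zero_add, add_comm]
  gcongr with k
  split_ifs with h₁ h₂ h₂
  exacts [le_rfl, absurd (h h₁) h₂, Nat.zero_le _, le_rfl]

theorem le_coveredMass (h : s(i, j) ∈ C) : m i j ≤ coveredMass m C i := by
  unfold coveredMass
  refine le_trans (le_of_eq ?_)
    (Finset.single_le_sum (fun _ _ => Nat.zero_le _) (Finset.mem_univ j))
  rw [if_pos h]

theorem coveredMass_eq_sum (h : ∀ j, m i j ≠ 0 → s(i, j) ∈ C) :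
    coveredMass m C i = ∑ j, m i j := by
  unfold coveredMass
  refine Finset.sum_congr rfl fun j _ => ?_
  by_cases hj : m i j = 0
  · simp [hj]
  · rw [if_pos (h j hj)]

end CoveredMass

end BMatching

section Budget

variable {V : Type} [DecidableEq V]

def earVertices (ears : List (List V)) : Finset V := ears.flatten.toFinset

theorem mem_earVertices {ears : List (List V)} {v : V} : v ∈ earVertices ears ↔ v ∈ ears.flatten :=
  List.mem_toFinset

theorem mem_earVertices_of_mem_coveredEdges {ears : List (List V)} {e : Sym2 V}
    (he : e ∈ coveredEdges ears) {v : V} (hv : v ∈ e) : v ∈ earVertices ears := by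
  obtain ⟨L, hL, heL⟩ := he
  exact mem_earVertices.mpr (List.mem_flatten.mpr ⟨L, hL, mem_of_mem_earEdgeSet heL hv⟩)

theorem IsEarSequence.earVertices_nonempty {G : SimpleGraph V} {ears : List (List V)}
    (h : IsEarSequence G ears) : (earVertices ears).Nonempty := by
  obtain ⟨L, hL⟩ := List.exists_mem_of_ne_nil _ h.ne_nil
  obtain ⟨v, hv⟩ : ∃ v, v ∈ L := by
    rcases (h.isChain_and_isEarList L hL).2 with ⟨hlen, -⟩ | ⟨hlen, -⟩ | ⟨v, -, -, rfl⟩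
    · exact List.exists_mem_of_length_pos (by omega)
    · exact List.exists_mem_of_length_pos (by omega)
    · exact ⟨v, List.mem_cons_self⟩
  exact ⟨v, mem_earVertices.mpr (List.mem_flatten.mpr ⟨L, hL, hv⟩)⟩

variable [Fintype V]

/-- Every vertex of the ears and every even ear but the first is paid for by a unit of
`m`-mass on the covered edges. -/
def EarBudget (m : V → V → ℕ) (ears : List (List V)) : Prop :=
  numEvenEars ears + (earVertices ears).card ≤
    ∑ i ∈ earVertices ears, coveredMass m (coveredEdges ears) i + 1

theorem earBudget_twoCycle {m : V → V → ℕ} {x y : V} (hxy : x ≠ y) (hmxy : 0 < m x y)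
    (hmyx : 0 < m y x) : EarBudget m [[x, y, x]] := by
  have hV : earVertices [[x, y, x]] = {x, y} := by
    ext v
    simp [mem_earVertices, or_comm]
  have hC : s(x, y) ∈ coveredEdges [[x, y, x]] :=
    earEdgeSet_subset_coveredEdges (List.mem_singleton_self _) (by simp [earEdgeSet_cons_cons])
  have hx := le_coveredMass (m := m) hC
  have hy := le_coveredMass (m := m) (Sym2.eq_swap ▸ hC : s(y, x) ∈ _)
  have hnum : numEvenEars [[x, y, x]] = 1 := by simp [numEvenEars]
  rw [EarBudget, hV, Finset.sum_pair hxy, Finset.card_pair hxy, hnum]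
  omega

theorem EarBudget.numEvenEars_add_card_le {G : SimpleGraph V} {b : V → ℕ} {m : V → V → ℕ}
    {ears : List (List V)} (hb : EarBudget m ears) (hm : IsPerfectBMatching G b m)
    (hcov : G.edgeSet ⊆ coveredEdges ears) (hdeg : ∀ v, ∃ w, G.Adj v w) :
    numEvenEars ears + Fintype.card V ≤ ∑ i, b i + 1 := by
  have hV : earVertices ears = Finset.univ := Finset.eq_univ_of_forall fun v => by
    obtain ⟨w, hw⟩ := hdeg v
    exact mem_earVertices_of_mem_coveredEdges (hcov hw) (Sym2.mem_mk_left v w)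
  have hmass (i : V) : coveredMass m (coveredEdges ears) i = b i :=
    (coveredMass_eq_sum fun j hj => hcov (hm.adj_of_ne_zero i j hj)).trans (hm.sum_eq i)
  rw [EarBudget, hV, Finset.card_univ] at hb
  simpa only [hmass] using hb

end Budget

section AdmissibleEar

variable {V : Type} {G : SimpleGraph V} {m : V → V → ℕ} {S : Finset V} {C : Set (Sym2 V)}
  {u v z : V} {ins : List V}

/-- An ear `u :: ins ++ [z]` with new interior `ins`, which can be attached to ears with vertex
set `S` and covered edges `C` without breaking `EarBudget`. -/
structure IsAdmissibleEar (G : SimpleGraph V) (m : V → V → ℕ) (S : Finset V) (C : Set (Sym2 V))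
    (u z : V) (ins : List V) : Prop where
  isChain : (u :: (ins ++ [z])).IsChain G.Adj
  left_mem : u ∈ S
  right_mem : z ∈ S
  notMem_of_mem : ∀ w ∈ ins, w ∉ S
  nodup : ins.Nodup
  ne_nil_of_eq : z = u → ins ≠ []
  disjoint : Disjoint C (earEdgeSet (u :: (ins ++ [z])))
  covers : ∀ w ∈ ins, ∃ y, s(w, y) ∈ earEdgeSet (u :: (ins ++ [z])) ∧ 0 < m w y
  pays : Odd ins.length → ∃ y, s(z, y) ∈ earEdgeSet (u :: (ins ++ [z])) ∧ 0 < m z y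

theorem disjoint_earEdgeSet_of_notMem (hins : ins ≠ []) (hS : ∀ w ∈ ins, w ∉ S)
    (hC : ∀ e ∈ C, ∀ v ∈ e, v ∈ S) : Disjoint C (earEdgeSet (u :: (ins ++ [z]))) :=
  Set.disjoint_right.mpr fun _ he heC => by
    obtain ⟨w, hw, hwe⟩ := exists_mem_of_mem_earEdgeSet hins he
    exact hS w hw (hC _ heC w hwe)

theorem isAdmissibleEar_chord (huv : G.Adj u v) (hu : u ∈ S) (hv : v ∈ S) (hC : s(u, v) ∉ C) :
    IsAdmissibleEar G m S C u v [] where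
  isChain := List.isChain_pair.mpr huv
  left_mem := hu
  right_mem := hv
  notMem_of_mem := by simp
  nodup := List.nodup_nil
  ne_nil_of_eq h := absurd h huv.ne'
  disjoint := by simpa [earEdgeSet_cons_cons, earEdgeSet_singleton] using hC
  covers := by simp
  pays := by simp

theorem isAdmissibleEar_pendant (huv : G.Adj u v) (hu : u ∈ S) (hv : v ∉ S) (hmuv : 0 < m u v)
    (hmvu : 0 < m v u) (hC : ∀ e ∈ C, ∀ v ∈ e, v ∈ S) : IsAdmissibleEar G m S C u u [v] where
  isChain := by simp [huv, huv.symm]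
  left_mem := hu
  right_mem := hu
  notMem_of_mem := by simpa using hv
  nodup := List.nodup_singleton v
  ne_nil_of_eq _ := List.cons_ne_nil _ _
  disjoint := disjoint_earEdgeSet_of_notMem (List.cons_ne_nil _ _) (by simpa using hv) hC
  covers w hw := by
    rw [List.mem_singleton.mp hw]
    exact ⟨u, by simp [earEdgeSet_cons_cons], hmvu⟩
  pays _ := ⟨v, by simp [earEdgeSet_cons_cons], hmuv⟩

variable [DecidableEq V] {ears : List (List V)}

theorem IsAdmissibleEar.isEarSequence_append (hseq : IsEarSequence G ears)
    (h : IsAdmissibleEar G m (earVertices ears) (coveredEdges ears) u z ins) :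
    IsEarSequence G (ears ++ [u :: (ins ++ [z])]) := by
  have hu := mem_earVertices.mp h.left_mem
  have hz := mem_earVertices.mp h.right_mem
  refine hseq.snoc h.isChain ?_ ⟨by simpa using hu, fun x hx => ?_, ?_⟩ h.disjoint
  · exact isEarList_cons_append (fun hu' => h.notMem_of_mem u hu' h.left_mem)
      (fun hz' => h.notMem_of_mem z hz' h.right_mem) h.nodup h.ne_nil_of_eq
  · rw [← List.cons_append, List.getLast?_concat, Option.mem_some_iff] at hx
    exact hx ▸ hz
  · rw [List.tail_cons, List.dropLast_concat]
    exact fun w hw hw' => h.notMem_of_mem w hw (mem_earVertices.mpr hw')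

theorem IsAdmissibleEar.ncard_diff_coveredEdges_lt [Finite V]
    (h : IsAdmissibleEar G m (earVertices ears) (coveredEdges ears) u z ins) :
    (G.edgeSet \ coveredEdges (ears ++ [u :: (ins ++ [z])])).ncard <
      (G.edgeSet \ coveredEdges ears).ncard := by
  obtain ⟨w, t, hwt⟩ : ∃ w t, ins ++ [z] = w :: t := List.exists_cons_of_ne_nil (by simp)
  have he : s(u, w) ∈ earEdgeSet (u :: (ins ++ [z])) := by
    rw [hwt, earEdgeSet_cons_cons]
    exact Set.mem_insert _ _
  rw [coveredEdges_append_singleton]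
  refine Set.ncard_lt_ncard ⟨Set.sdiff_subset_sdiff_right Set.subset_union_left, fun hsub => ?_⟩
  exact (hsub ⟨earEdgeSet_subset_edgeSet h.isChain he, Set.disjoint_right.mp h.disjoint he⟩).2
    (Or.inr he)

theorem IsAdmissibleEar.earBudget_append [Fintype V] (hb : EarBudget m ears)
    (h : IsAdmissibleEar G m (earVertices ears) (coveredEdges ears) u z ins) :
    EarBudget m (ears ++ [u :: (ins ++ [z])]) := by
  have hV : earVertices (ears ++ [u :: (ins ++ [z])]) = earVertices ears ∪ ins.toFinset := by
    have hu := mem_earVertices.mp h.left_mem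
    have hz := mem_earVertices.mp h.right_mem
    ext v
    simp only [mem_earVertices, Finset.mem_union, List.mem_toFinset]
    aesop
  have hdisj : Disjoint (earVertices ears) ins.toFinset :=
    Finset.disjoint_right.mpr fun w hw => h.notMem_of_mem w (List.mem_toFinset.mp hw)
  have hlen : (u :: (ins ++ [z])).length % 2 = ins.length % 2 := by
    simp only [List.length_cons, List.length_append, List.length_nil]
    omega
  unfold EarBudget at hb ⊢
  rw [coveredEdges_append_singleton, hV, Finset.sum_union hdisj,
    Finset.card_union_of_disjoint hdisj, List.toFinset_card_of_nodup h.nodup,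
    numEvenEars_append_singleton, hlen]
  set C' := coveredEdges ears ∪ earEdgeSet (u :: (ins ++ [z]))
  have hCC' : coveredEdges ears ⊆ C' := Set.subset_union_left
  have hold : ∑ i ∈ earVertices ears, coveredMass m (coveredEdges ears) i + ins.length % 2 ≤
      ∑ i ∈ earVertices ears, coveredMass m C' i := by
    rcases Nat.mod_two_eq_zero_or_one ins.length with heven | hodd
    · simpa [heven] using Finset.sum_le_sum fun i _ => coveredMass_mono hCC' i
    · obtain ⟨y, hy, hmy⟩ := h.pays (Nat.odd_iff.mpr hodd)
      rw [hodd]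
      refine Finset.sum_lt_sum (fun i _ => coveredMass_mono hCC' i) ⟨z, h.right_mem, ?_⟩
      exact lt_of_lt_of_le (Nat.lt_add_of_pos_right hmy)
        (coveredMass_add_le hCC' (Set.disjoint_right.mp h.disjoint hy) (Or.inr hy))
  have hfresh : ins.length ≤ ∑ i ∈ ins.toFinset, coveredMass m C' i := by
    rw [← List.toFinset_card_of_nodup h.nodup]
    simpa using Finset.card_nsmul_le_sum ins.toFinset (coveredMass m C') 1 fun w hw => by
      obtain ⟨y, hy, hmy⟩ := h.covers w (List.mem_toFinset.mp hw)
      exact le_trans hmy (le_coveredMass (Or.inr hy))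
  omega

end AdmissibleEar

section AlternatingPath

variable {V : Type}

theorem circulation_eq_zero_of_closed [Fintype V] {d : V → V → ℤ}
    (hsymm : ∀ u v, d u v = d v u) (hsum : ∀ v, ∑ u, d v u = 0) {P Q : Finset V}
    (hP : ∀ v ∈ P, ∀ u, d v u < 0 → u ∈ Q) (hQ : ∀ v ∈ Q, ∀ u, 0 < d v u → u ∈ P)
    {v u : V} (hv : v ∈ P) (hu : u ∉ Q) : d v u = 0 := by
  classical
  -- `∑_{P × Q} d ≤ 0 ≤ ∑_{Q × P} d`, and the two sums agree by symmetry.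
  have hout (v) (hv : v ∈ P) : ∀ u ∈ Qᶜ, 0 ≤ d v u := fun u hu =>
    not_lt.mp fun h => Finset.mem_compl.mp hu (hP v hv u h)
  have hPQ (v) (_ : v ∈ P) : ∑ u ∈ Q, d v u = -∑ u ∈ Qᶜ, d v u := by
    linarith [Finset.sum_add_sum_compl Q (d v), hsum v]
  have hQP (v) (hv : v ∈ Q) : 0 ≤ ∑ u ∈ P, d v u := by
    have : ∑ u ∈ Pᶜ, d v u ≤ 0 := Finset.sum_nonpos fun u hu =>
      not_lt.mp fun h => Finset.mem_compl.mp hu (hQ v hv u h)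
    linarith [Finset.sum_add_sum_compl P (d v), hsum v]
  have hswap : ∑ v ∈ P, ∑ u ∈ Q, d v u = ∑ v ∈ Q, ∑ u ∈ P, d v u := by
    rw [Finset.sum_comm]
    exact Finset.sum_congr rfl fun _ _ => Finset.sum_congr rfl fun _ _ => hsymm _ _
  have htotal : ∑ v ∈ P, ∑ u ∈ Qᶜ, d v u = 0 := by
    refine le_antisymm ?_ (Finset.sum_nonneg fun v hv => Finset.sum_nonneg (hout v hv))
    rw [Finset.sum_congr rfl hPQ, Finset.sum_neg_distrib] at hswap
    linarith [Finset.sum_nonneg hQP]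
  rw [Finset.sum_eq_zero_iff_of_nonneg fun v hv => Finset.sum_nonneg (hout v hv)] at htotal
  exact (Finset.sum_eq_zero_iff_of_nonneg (hout v hv)).mp (htotal v hv) u (Finset.mem_compl.mpr hu)

def IsAlternatingStep (m m' : V → V → ℕ) (S : Finset V) (c : V → Bool) (x₀ v u : V) : Prop :=
  v ∉ S ∧ if c v = c x₀ then m v u < m' v u else m' v u < m v u

variable {m m' : V → V → ℕ} {S : Finset V} {c : V → Bool} {x₀ x₁ v u : V}

theorem IsAlternatingStep.pos (h : IsAlternatingStep m m' S c x₀ v u) (hv : c v ≠ c x₀) :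
    0 < m v u := by
  obtain ⟨-, h⟩ := h
  rw [if_neg hv] at h
  omega

variable [Fintype V] {G : SimpleGraph V} {b : V → ℕ}

theorem IsAlternatingStep.adj (hm : IsPerfectBMatching G b m) (hm' : IsPerfectBMatching G b m')
    (h : IsAlternatingStep m m' S c x₀ v u) : G.Adj v u := by
  obtain ⟨-, h⟩ := h
  split_ifs at h
  · exact hm'.adj_of_ne_zero v u (by omega)
  · exact hm.adj_of_ne_zero v u (by omega)

theorem exists_mem_reflTransGen_isAlternatingStep (hc : ∀ ⦃u v⦄, G.Adj u v → c u ≠ c v)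
    (hm : IsPerfectBMatching G b m) (hm' : IsPerfectBMatching G b m') (hx₀ : x₀ ∈ S)
    (hlt : m x₀ x₁ < m' x₀ x₁) :
    ∃ z ∈ S, Relation.ReflTransGen (IsAlternatingStep m m' S c x₀) x₁ z := by
  classical
  by_contra! hno
  set R := IsAlternatingStep m m' S c x₀
  set T := Finset.univ.filter (Relation.ReflTransGen R x₁)
  have hT {v : V} : v ∈ T ↔ Relation.ReflTransGen R x₁ v := by simp [T]
  have hTS {v : V} (hv : v ∈ T) : v ∉ S := fun hvS => hno v hvS (hT.mp hv)
  have hx₀x₁ : G.Adj x₀ x₁ := hm'.adj_of_ne_zero _ _ (by omega)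
  -- The walks from `x₁` never reach `S`, so `m' - m` vanishes from `x₁` to `x₀`.
  have key := circulation_eq_zero_of_closed (d := fun v u => (m' v u : ℤ) - m v u)
    (fun u v => by rw [hm.symm, hm'.symm])
    (fun v => by
      rw [Finset.sum_sub_distrib, ← Nat.cast_sum, ← Nat.cast_sum, hm.sum_eq, hm'.sum_eq, sub_self])
    (P := T.filter (c · ≠ c x₀)) (Q := T.filter (c · = c x₀)) ?_ ?_ (v := x₁) (u := x₀) ?_ ?_
  · rw [hm.symm, hm'.symm] at key
    omega
  · intro v hv u hvu
    simp only [Finset.mem_filter] at hv ⊢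
    have hstep : R v u := ⟨hTS hv.1, by rw [if_neg hv.2]; omega⟩
    exact ⟨hT.mpr ((hT.mp hv.1).tail hstep),
      Bool.eq_of_ne_of_ne hv.2 (hc (hstep.adj hm hm')).symm⟩
  · intro v hv u hvu
    simp only [Finset.mem_filter] at hv ⊢
    have hstep : R v u := ⟨hTS hv.1, by rw [if_pos hv.2]; omega⟩
    exact ⟨hT.mpr ((hT.mp hv.1).tail hstep), fun h => hc (hstep.adj hm hm') (hv.2.trans h.symm)⟩
  · simp only [Finset.mem_filter]
    exact ⟨hT.mpr Relation.ReflTransGen.refl, (hc hx₀x₁).symm⟩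
  · simp only [Finset.mem_filter, not_and]
    exact fun h => absurd hx₀ (hTS h)

theorem exists_isAdmissibleEar_of_lt {C : Set (Sym2 V)} (hc : ∀ ⦃u v⦄, G.Adj u v → c u ≠ c v)
    (hm : IsPerfectBMatching G b m) (hm' : IsPerfectBMatching G b m') (hx₀ : x₀ ∈ S)
    (hx₁ : x₁ ∉ S) (hlt : m x₀ x₁ < m' x₀ x₁) (hC : ∀ e ∈ C, ∀ v ∈ e, v ∈ S) :
    ∃ z ins, IsAdmissibleEar G m S C x₀ z ins := by
  obtain ⟨z, hzS, hreach⟩ := exists_mem_reflTransGen_isAlternatingStep hc hm hm' hx₀ hlt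
  obtain ⟨l, hchain, hnodup⟩ :=
    List.exists_nodup_isChain_of_reflTransGen hreach fun h => hx₁ (h ▸ hzS)
  have hx₀x₁ : G.Adj x₀ x₁ := hm'.adj_of_ne_zero _ _ (by omega)
  have hpath : (x₀ :: (x₁ :: l ++ [z])).IsChain G.Adj :=
    (hchain.imp fun _ _ h => h.adj hm hm').cons_cons hx₀x₁
  have hsucc {w : V} (hw : w ∈ x₁ :: l) := exists_rel_mem_earEdgeSet_of_mem (l := x₁ :: l) hchain hw
  have hout : ∀ w ∈ x₁ :: l, w ∉ S := fun w hw => (hsucc hw).choose_spec.1.1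
  -- A vertex in the colour class of `x₀` is entered along an edge where `m > m'`.
  have hpred {w : V} (hw : w ∈ l ++ [z]) (hcw : c w = c x₀) :
      ∃ p, s(w, p) ∈ earEdgeSet (x₀ :: (x₁ :: l ++ [z])) ∧ 0 < m w p := by
    obtain ⟨p, hp, hpe⟩ := exists_rel_mem_earEdgeSet_of_mem_tail hchain hw
    refine ⟨p, Sym2.eq_swap ▸ earEdgeSet_subset_cons_cons _ _ _ hpe, ?_⟩
    rw [hm.symm]
    exact hp.pos fun h => hc (hp.adj hm hm') (h.trans hcw.symm)
  refine ⟨z, x₁ :: l, hpath, hx₀, hzS, hout, hnodup.sublist (List.sublist_append_left _ _),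
    fun _ => List.cons_ne_nil _ _, disjoint_earEdgeSet_of_notMem (List.cons_ne_nil _ _) hout hC,
    fun w hw => ?_, fun hodd => hpred (List.mem_append_right l (List.mem_singleton_self z))
      ((hpath.imp fun _ _ h => hc h).bool_eq_iff_odd_length.mpr hodd)⟩
  by_cases hcw : c w = c x₀
  · rcases List.mem_cons.mp hw with rfl | hw
    · exact absurd hcw (hc hx₀x₁).symm
    · exact hpred (List.mem_append_left _ hw) hcw
  · obtain ⟨y, hy, hye⟩ := hsucc hw
    exact ⟨y, earEdgeSet_subset_cons_cons _ _ _ hye, hy.pos hcw⟩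

end AlternatingPath

theorem exists_adj_notMem_of_not_subset {V : Type} {G : SimpleGraph V} (hconn : G.Connected)
    {S : Finset V} {C : Set (Sym2 V)} (hS : S.Nonempty) (hC : ∀ e ∈ C, ∀ v ∈ e, v ∈ S)
    (hunc : ¬G.edgeSet ⊆ C) : ∃ u v, G.Adj u v ∧ s(u, v) ∉ C ∧ u ∈ S := by
  obtain ⟨e, heG, heC⟩ := Set.not_subset.mp hunc
  induction e using Sym2.ind with | _ p q => ?_
  by_cases hp : p ∈ S
  · exact ⟨p, q, heG, heC, hp⟩
  obtain ⟨w₀, hw₀⟩ := hS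
  obtain ⟨d, -, hd₁, hd₂⟩ :=
    (hconn.preconnected w₀ p).some.exists_boundary_dart (S : Set V) hw₀ hp
  exact ⟨d.toProd.1, d.toProd.2, d.adj, fun hd => hd₂ (hC _ hd _ (Sym2.mem_mk_right _ _)), hd₁⟩

namespace IsEarSequence

variable {V : Type} [Fintype V] [DecidableEq V] {G : SimpleGraph V} {b : V → ℕ}
  {m : V → V → ℕ} {c : V → Bool} {ears : List (List V)}

theorem exists_isAdmissibleEar (hseq : IsEarSequence G ears) (hconn : G.Connected)
    (hc : ∀ ⦃u v⦄, G.Adj u v → c u ≠ c v) (hm : IsPerfectBMatching G b m)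
    (hsupp : ∀ ⦃u v⦄, G.Adj u v → ∃ m', IsPerfectBMatching G b m' ∧ 0 < m' u v)
    (hunc : ¬G.edgeSet ⊆ coveredEdges ears) :
    ∃ u z ins, IsAdmissibleEar G m (earVertices ears) (coveredEdges ears) u z ins := by
  have hC : ∀ e ∈ coveredEdges ears, ∀ v ∈ e, v ∈ earVertices ears :=
    fun _ he _ hv => mem_earVertices_of_mem_coveredEdges he hv
  obtain ⟨u, v, huv, huvC, hu⟩ :=
    exists_adj_notMem_of_not_subset hconn hseq.earVertices_nonempty hC hunc
  by_cases hv : v ∈ earVertices ears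
  · exact ⟨u, v, [], isAdmissibleEar_chord huv hu hv huvC⟩
  rcases Nat.eq_zero_or_pos (m u v) with hmuv | hmuv
  · obtain ⟨m', hm', hm'uv⟩ := hsupp huv
    obtain ⟨z, ins, h⟩ := exists_isAdmissibleEar_of_lt hc hm hm' hu hv (by omega) hC
    exact ⟨u, z, ins, h⟩
  · exact ⟨u, u, [v], isAdmissibleEar_pendant huv hu hv hmuv (hm.symm v u ▸ hmuv) hC⟩

theorem exists_covering (hseq : IsEarSequence G ears) (hb : EarBudget m ears)
    (hconn : G.Connected) (hc : ∀ ⦃u v⦄, G.Adj u v → c u ≠ c v) (hm : IsPerfectBMatching G b m)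
    (hsupp : ∀ ⦃u v⦄, G.Adj u v → ∃ m', IsPerfectBMatching G b m' ∧ 0 < m' u v) :
    ∃ ears', IsEarSequence G ears' ∧ EarBudget m ears' ∧ G.edgeSet ⊆ coveredEdges ears' := by
  induction hk : (G.edgeSet \ coveredEdges ears).ncard using Nat.strong_induction_on
    generalizing ears with
  | _ k ih =>
    by_cases hcov : G.edgeSet ⊆ coveredEdges ears
    · exact ⟨ears, hseq, hb, hcov⟩
    obtain ⟨u, z, ins, h⟩ := hseq.exists_isAdmissibleEar hconn hc hm hsupp hcov
    exact ih _ (hk ▸ h.ncard_diff_coveredEdges_lt) (h.isEarSequence_append hseq)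
      (h.earBudget_append hb) rfl

end IsEarSequence

section Parallelization

variable {V : Type} {G : SimpleGraph V} {a : V → ℕ}

open Classical in
noncomputable def copyEdgeCount (M : (parallelization G a).Subgraph) (i j : V) : ℕ :=
  ∑ s : Fin (a i), ∑ t : Fin (a j), if M.Adj ⟨i, s⟩ ⟨j, t⟩ then 1 else 0

theorem copyEdgeCount_pos {M : (parallelization G a).Subgraph} {x y : Σ i, Fin (a i)}
    (h : M.Adj x y) : 0 < copyEdgeCount M x.1 y.1 := by
  unfold copyEdgeCount
  refine lt_of_lt_of_le ?_ (Finset.single_le_sum (fun _ _ => Nat.zero_le _) (Finset.mem_univ x.2))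
  refine lt_of_lt_of_le ?_ (Finset.single_le_sum (fun _ _ => Nat.zero_le _) (Finset.mem_univ y.2))
  rw [if_pos h]
  exact Nat.one_pos

theorem isPerfectBMatching_copyEdgeCount [Fintype V] {M : (parallelization G a).Subgraph}
    (hM : M.IsPerfectMatching) : IsPerfectBMatching G a (copyEdgeCount M) where
  symm i j := by
    unfold copyEdgeCount
    rw [Finset.sum_comm]
    exact Finset.sum_congr rfl fun t _ => Finset.sum_congr rfl fun s _ => by rw [M.adj_comm]
  adj_of_ne_zero i j h := by
    by_contra hij
    refine h (Finset.sum_eq_zero fun s _ => Finset.sum_eq_zero fun t _ => if_neg fun hst => ?_)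
    exact hij (M.adj_sub hst)
  sum_eq i := by
    classical
    have hone (x : Σ i, Fin (a i)) : ∑ w, (if M.Adj x w then 1 else 0) = 1 := by
      obtain ⟨w₀, hw₀, huniq⟩ := SimpleGraph.Subgraph.isPerfectMatching_iff.mp hM x
      rw [Finset.sum_eq_single w₀ (fun w _ hw => if_neg fun h => hw (huniq w h)) (by simp),
        if_pos hw₀]
    unfold copyEdgeCount
    rw [Finset.sum_comm]
    calc ∑ s, ∑ j, ∑ t : Fin (a j), (if M.Adj ⟨i, s⟩ ⟨j, t⟩ then 1 else 0)
        = ∑ s : Fin (a i), 1 := Finset.sum_congr rfl fun s _ =>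
          (Fintype.sum_sigma fun w => if M.Adj ⟨i, s⟩ w then 1 else 0).symm.trans (hone ⟨i, s⟩)
      _ = a i := by simp

theorem IsMatchingCovered.exists_isPerfectBMatching_pos [Fintype V]
    (hmc : IsMatchingCovered (parallelization G a)) (ha : ∀ i, a i ≠ 0) :
    ∀ ⦃i j : V⦄, G.Adj i j → ∃ m, IsPerfectBMatching G a m ∧ 0 < m i j := by
  intro i j hij
  let x : Σ i, Fin (a i) := ⟨i, ⟨0, Nat.pos_of_ne_zero (ha i)⟩⟩
  let y : Σ i, Fin (a i) := ⟨j, ⟨0, Nat.pos_of_ne_zero (ha j)⟩⟩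
  obtain ⟨M, hM, hxy⟩ := hmc.2.2 s(x, y) hij
  exact ⟨copyEdgeCount M, isPerfectBMatching_copyEdgeCount hM,
    copyEdgeCount_pos (SimpleGraph.Subgraph.mem_edgeSet.mp hxy)⟩

end Parallelization

theorem IsBipartiteGraph.exists_coloring {V : Type} {G : SimpleGraph V} (h : IsBipartiteGraph G) :
    ∃ c : V → Bool, ∀ ⦃u v⦄, G.Adj u v → c u ≠ c v := by
  classical
  obtain ⟨A, B, -, hAB, hadj⟩ := h
  have hB {w : V} (hwB : w ∈ B) : w ∉ A := fun hwA =>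
    Set.eq_empty_iff_forall_notMem.mp hAB w ⟨hwA, hwB⟩
  refine ⟨fun v => decide (v ∈ A), fun u v huv => ?_⟩
  rcases hadj huv with ⟨hu, hv⟩ | ⟨hu, hv⟩ <;> simp [hu, hv, hB]

/-- **Proposition.** If `G^a` is matching-covered with `supp(a) = V` for a connected bipartite
graph `G` on `n` vertices, then `|a| ≥ φ(G) + n − 1`. -/
theorem matchingCovered_parallelization_order {n : ℕ} (G : SimpleGraph (Fin n))
    (hconn : G.Connected) (hbip : IsBipartiteGraph G)
    (a : Fin n → ℕ) (ha : ∀ i, a i ≠ 0)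
    (hmc : IsMatchingCovered (parallelization G a)) :
    phiGraph G + n - 1 ≤ ∑ i, a i := by
  obtain ⟨c, hc⟩ := hbip.exists_coloring
  have hsupp := hmc.exists_isPerfectBMatching_pos ha
  obtain ⟨x, y, hxy⟩ : ∃ x y, G.Adj x y := by
    obtain ⟨x, y, hxy⟩ := SimpleGraph.ne_bot_iff_exists_adj.mp
      (SimpleGraph.edgeSet_nonempty.mp hmc.2.1)
    exact ⟨x.1, y.1, hxy⟩
  obtain ⟨m, hm, hmxy⟩ := hsupp hxy
  have hstart : IsEarSequence G [[x, y, x]] :=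
    .single (by simp [hxy, hxy.symm]) (Or.inr ⟨x, y, hxy.ne, rfl⟩)
  obtain ⟨ears, hseq, hb, hcov⟩ := hstart.exists_covering
    (earBudget_twoCycle hxy.ne hmxy (hm.symm y x ▸ hmxy)) hconn hc hm hsupp
  have : Nontrivial (Fin n) := ⟨⟨x, y, hxy.ne⟩⟩
  have hcount := hb.numEvenEars_add_card_le hm hcov hconn.preconnected.exists_adj_of_nontrivial
  have hphi := hseq.phiGraph_le hcov
  rw [Fintype.card_fin] at hcount
  omega
end

section
/- Let G be a connected bipartite graph and let H be a connected spanning subgraph of G (i.e., H has the same vertex set as G). Then μ(G) ≤ μ(H) and s(G) ≤ s(H). -/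
open MvPolynomial

/-! Appending the edges of `G` missing from `H` one at a time, each as a single-edge (hence odd)
ear, turns a generalized ear decomposition of `H` into one of `G` with the same even ears, so
`φ(G) ≤ φ(H)` and `μ(G) ≤ μ(H)`. As `φ` is an infimum and `sInf ∅ = 0`, this needs `H` to have a
decomposition at all: grow a spanning tree of `H` edge by edge, each tree edge a 2-cycle, then add
the remaining edges.

For `s`, a dominating connected induced subgraph `H_U` of `H` is a spanning subgraph of `G_U`,
which is then dominating and connected too. If `G` is not complete bipartite, neither is `H`:
the parts of a complete bipartite `H` are parts for the bipartite `G`, since an edge of `G` inside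
a part would close a triangle with a common neighbour in the other part. -/

section

variable {V : Type}

lemma earEdgeSet_pair (u v : V) : earEdgeSet [u, v] = {s(u, v)} := by
  simp [earEdgeSet]

lemma earEdgeSet_twoCycle (u v : V) : earEdgeSet [u, v, u] = {s(u, v)} := by
  ext e
  simp [earEdgeSet, Sym2.eq_swap]

lemma IsEarList.length_pos {L : List V} (hL : IsEarList L) : 0 < L.length := by
  rcases hL with h | h | ⟨v, w, -, rfl⟩
  · linarith [h.1]
  · linarith [h.1]
  · simp

lemma SimpleGraph.edge_adj_of_ne {u v : V} (huv : u ≠ v) : (SimpleGraph.edge u v).Adj u v :=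
  (SimpleGraph.edge_adj _ _ _ _).2 ⟨Or.inl ⟨rfl, rfl⟩, huv⟩

lemma SimpleGraph.Adj.isChain_twoCycle {G : SimpleGraph V} {u v : V} (h : G.Adj u v) :
    [u, v, u].IsChain G.Adj :=
  List.isChain_cons_cons.2 ⟨h, List.isChain_pair.2 h.symm⟩

lemma SimpleGraph.edgeSet_sup_edge (H : SimpleGraph V) {u v : V} (huv : u ≠ v) :
    (H ⊔ SimpleGraph.edge u v).edgeSet = H.edgeSet ∪ {s(u, v)} := by
  rw [SimpleGraph.edgeSet_sup, SimpleGraph.edgeSet_edge_of_ne huv]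

end

namespace GenEarDecomp

variable {V : Type} {G H : SimpleGraph V}

lemma earEdgeSet_subset_edgeSet (E : GenEarDecomp H) {L : List V} (hL : L ∈ E.ears) :
    earEdgeSet L ⊆ H.edgeSet :=
  fun _ he => (E.edges_cover _).2 ⟨L, hL, he⟩

lemma mem_flatten_of_adj (E : GenEarDecomp H) {v u : V} (h : H.Adj v u) :
    v ∈ E.ears.flatten := by
  obtain ⟨L, hL, ⟨a, b⟩, hp, he⟩ := (E.edges_cover s(v, u)).1 h
  rcases Sym2.eq_iff.1 he with ⟨rfl, -⟩ | ⟨rfl, -⟩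
  · exact List.mem_flatten.2 ⟨L, hL, (List.of_mem_zip hp).1⟩
  · exact List.mem_flatten.2 ⟨L, hL, List.mem_of_mem_tail (List.of_mem_zip hp).2⟩

def snoc (E : GenEarDecomp H) (L : List V) (hL : IsEarList L) (hchain : L.IsChain G.Adj)
    (hhead : ∀ x ∈ L.head?, x ∈ E.ears.flatten) (hlast : ∀ x ∈ L.getLast?, x ∈ E.ears.flatten)
    (hinner : ∀ x ∈ L.tail.dropLast, x ∉ E.ears.flatten)
    (hnew : Disjoint (earEdgeSet L) H.edgeSet) (hG : G.edgeSet = H.edgeSet ∪ earEdgeSet L) :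
    GenEarDecomp G where
  ears := E.ears ++ [L]
  ears_nonempty := by simp
  chain_adj L' hL' := by
    have hHG : H ≤ G := SimpleGraph.edgeSet_subset_edgeSet.1 (hG ▸ Set.subset_union_left)
    rcases List.mem_append.1 hL' with h | h
    · exact (E.chain_adj L' h).imp fun _ _ hab => hHG hab
    · rwa [List.mem_singleton.1 h]
  shape L' hL' := by
    rcases List.mem_append.1 hL' with h | h
    · exact E.shape L' h
    · rwa [List.mem_singleton.1 h]
  first_cycle L' hL' :=
    E.first_cycle L' (by rwa [List.head?_append_of_ne_nil _ E.ears_nonempty] at hL')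
  attach_ends i hi h1 := by
    rw [List.length_append, List.length_singleton] at hi
    rcases Nat.lt_succ_iff_lt_or_eq.1 hi with hlt | rfl
    · simpa [List.take_append_of_le_length hlt.le, List.getElem_append_left hlt] using
        E.attach_ends i hlt h1
    · simpa only [List.get_eq_getElem, List.getElem_concat_length, List.take_left'] using
        ⟨hhead, hlast⟩
  attach_inner i hi h1 := by
    rw [List.length_append, List.length_singleton] at hi
    rcases Nat.lt_succ_iff_lt_or_eq.1 hi with hlt | rfl
    · simpa [List.take_append_of_le_length hlt.le, List.getElem_append_left hlt] using
        E.attach_inner i hlt h1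
    · simpa only [List.get_eq_getElem, List.getElem_concat_length, List.take_left'] using hinner
  edges_disjoint i j hi hj hij := by
    have hold : ∀ k (hk : k < E.ears.length), Disjoint (earEdgeSet E.ears[k]) (earEdgeSet L) :=
      fun k hk => (hnew.mono_right (E.earEdgeSet_subset_edgeSet (List.getElem_mem hk))).symm
    rw [List.length_append, List.length_singleton] at hi hj
    simp only [List.get_eq_getElem]
    rcases Nat.lt_succ_iff_lt_or_eq.1 hi with hi | rfl <;>
      rcases Nat.lt_succ_iff_lt_or_eq.1 hj with hj | rfl
    · simpa [List.getElem_append_left hi, List.getElem_append_left hj] using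
        E.edges_disjoint i j hi hj hij
    · simpa [List.getElem_append_left hi] using hold i hi
    · simpa [List.getElem_append_left hj] using (hold j hj).symm
    · exact absurd rfl hij
  edges_cover e := by
    rw [hG, Set.mem_union, E.edges_cover]
    simp [or_comm]

def ofAdj {u v : V} (huv : u ≠ v) : GenEarDecomp (SimpleGraph.edge u v) where
  ears := [[u, v, u]]
  ears_nonempty := by simp
  chain_adj L hL := by
    rw [List.mem_singleton.1 hL]
    exact (SimpleGraph.edge_adj_of_ne huv).isChain_twoCycle
  shape L hL := List.mem_singleton.1 hL ▸ Or.inr (Or.inr ⟨u, v, huv, rfl⟩)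
  first_cycle L hL := by
    rw [List.head?_cons, Option.mem_some_iff] at hL
    exact hL ▸ Or.inr ⟨u, v, huv, rfl⟩
  attach_ends i hi h1 := by simp at hi; omega
  attach_inner i hi h1 := by simp at hi; omega
  edges_disjoint i j hi hj hij := by simp at hi hj; omega
  edges_cover e := by simp [SimpleGraph.edgeSet_edge_of_ne huv, earEdgeSet_twoCycle]

def addChord (E : GenEarDecomp H) {u v : V} (hu : u ∈ E.ears.flatten) (hv : v ∈ E.ears.flatten)
    (huv : u ≠ v) (hnew : ¬ H.Adj u v) : GenEarDecomp (H ⊔ SimpleGraph.edge u v) :=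
  E.snoc [u, v] (Or.inl ⟨le_rfl, by simpa using huv⟩)
    (List.isChain_pair.2 (le_sup_right (a := H) (SimpleGraph.edge_adj_of_ne huv)))
    (by simpa using hu) (by simpa using hv) (by simp)
    (by rw [earEdgeSet_pair]; exact Set.disjoint_singleton_left.2 hnew)
    (by rw [earEdgeSet_pair, SimpleGraph.edgeSet_sup_edge H huv])

def addPendant (E : GenEarDecomp H) {u v : V} (hu : u ∈ E.ears.flatten)
    (hv : v ∉ E.ears.flatten) : GenEarDecomp (H ⊔ SimpleGraph.edge u v) :=
  have huv : u ≠ v := fun h => hv (h ▸ hu)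
  E.snoc [u, v, u] (Or.inr (Or.inr ⟨u, v, huv, rfl⟩))
    (le_sup_right (a := H) (SimpleGraph.edge_adj_of_ne huv)).isChain_twoCycle
    (by simpa using hu) (by simpa using hu) (by simpa using hv)
    (by
      rw [earEdgeSet_twoCycle]
      exact Set.disjoint_singleton_left.2 fun h => hv (E.mem_flatten_of_adj h.symm))
    (by rw [earEdgeSet_twoCycle, SimpleGraph.edgeSet_sup_edge H huv])

lemma evenEarCount_addChord (E : GenEarDecomp H) {u v : V} (hu : u ∈ E.ears.flatten)
    (hv : v ∈ E.ears.flatten) (huv : u ≠ v) (hnew : ¬ H.Adj u v) :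
    evenEarCount (E.addChord hu hv huv hnew) = evenEarCount E := by
  simp [evenEarCount, addChord, snoc]

lemma flatten_addChord (E : GenEarDecomp H) {u v : V} (hu : u ∈ E.ears.flatten)
    (hv : v ∈ E.ears.flatten) (huv : u ≠ v) (hnew : ¬ H.Adj u v) :
    (E.addChord hu hv huv hnew).ears.flatten = E.ears.flatten ++ [u, v] := by
  simp [addChord, snoc]

lemma flatten_addPendant (E : GenEarDecomp H) {u v : V} (hu : u ∈ E.ears.flatten)
    (hv : v ∉ E.ears.flatten) :
    (E.addPendant hu hv).ears.flatten = E.ears.flatten ++ [u, v, u] := by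
  simp [addPendant, snoc]

lemma exists_mem_flatten (E : GenEarDecomp H) : ∃ v, v ∈ E.ears.flatten := by
  obtain ⟨L, hL⟩ := List.exists_mem_of_ne_nil _ E.ears_nonempty
  obtain ⟨v, hv⟩ := List.exists_mem_of_length_pos (E.shape L hL).length_pos
  exact ⟨v, List.mem_flatten.2 ⟨L, hL, hv⟩⟩

theorem exists_evenEarCount_eq_of_le [Finite V] (hHG : H ≤ G) (E : GenEarDecomp H)
    (hE : ∀ v, v ∈ E.ears.flatten) : ∃ E' : GenEarDecomp G, evenEarCount E' = evenEarCount E := by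
  induction hn : (G.edgeSet \ H.edgeSet).ncard using Nat.strong_induction_on generalizing H with
  | _ n ih =>
  obtain hempty | ⟨e, heG, heH⟩ := (G.edgeSet \ H.edgeSet).eq_empty_or_nonempty
  · obtain rfl : H = G :=
      le_antisymm hHG (SimpleGraph.edgeSet_subset_edgeSet.1 (Set.sdiff_eq_empty.1 hempty))
    exact ⟨E, rfl⟩
  induction e using Sym2.ind with | _ u v => ?_
  rw [SimpleGraph.mem_edgeSet] at heG heH
  have huv : u ≠ v := G.ne_of_adj heG
  have hlt : (G.edgeSet \ (H ⊔ SimpleGraph.edge u v).edgeSet).ncard < n := by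
    rw [SimpleGraph.edgeSet_sup_edge H huv, ← Set.sdiff_sdiff, ← hn]
    exact Set.ncard_sdiff_singleton_lt_of_mem ⟨heG, heH⟩
  obtain ⟨E', hE'⟩ := ih _ hlt (sup_le hHG ((SimpleGraph.edge_le_iff _).2 (Or.inr heG)))
    (E.addChord (hE u) (hE v) huv heH) (fun x => by
      rw [flatten_addChord]; exact List.mem_append_left _ (hE x)) rfl
  exact ⟨E', hE'.trans (E.evenEarCount_addChord _ _ huv heH)⟩

theorem exists_spanning_le [Finite V] (hH : H.Connected) {K : SimpleGraph V} (hKH : K ≤ H)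
    (E : GenEarDecomp K) : ∃ K ≤ H, ∃ E : GenEarDecomp K, ∀ v, v ∈ E.ears.flatten := by
  induction hn : {v | v ∉ E.ears.flatten}.ncard using Nat.strong_induction_on generalizing K with
  | _ n ih =>
  by_cases hall : ∀ v, v ∈ E.ears.flatten
  · exact ⟨K, hKH, E, hall⟩
  obtain ⟨w, hw⟩ := not_forall.1 hall
  obtain ⟨u, hu⟩ := E.exists_mem_flatten
  obtain ⟨d, -, hd₁, hd₂⟩ :=
    (hH.preconnected u w).some.exists_boundary_dart {v | v ∈ E.ears.flatten} hu hw
  refine ih _ ?_ (sup_le hKH ((SimpleGraph.edge_le_iff _).2 (Or.inr d.adj)))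
    (E.addPendant hd₁ hd₂) rfl
  rw [← hn, flatten_addPendant]
  refine Set.ncard_lt_ncard ((Set.ssubset_iff_of_subset fun v hv => ?_).2 ⟨_, hd₂, ?_⟩)
  · simp_all
  · simp

theorem nonempty_of_connected [Finite V] [Nontrivial V] (hH : H.Connected) :
    Nonempty (GenEarDecomp H) := by
  obtain ⟨u⟩ := hH.nonempty
  obtain ⟨v, huv⟩ := hH.preconnected.exists_adj_of_nontrivial u
  obtain ⟨K, hKH, E, hE⟩ :=
    exists_spanning_le hH ((SimpleGraph.edge_le_iff _).2 (Or.inr huv)) (ofAdj huv.ne)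
  exact ⟨(exists_evenEarCount_eq_of_le hKH E hE).choose⟩

end GenEarDecomp

section

variable {V : Type} {G H : SimpleGraph V}

theorem phiGraph_le_of_le [Finite V] (hHG : H ≤ G) (hH : H.Connected) :
    phiGraph G ≤ phiGraph H := by
  rcases subsingleton_or_nontrivial V with hV | hV
  · rw [Subsingleton.elim G H]
  obtain ⟨E⟩ := GenEarDecomp.nonempty_of_connected hH
  obtain ⟨E₀, hE₀⟩ :=
    Nat.sInf_mem (s := {m | ∃ E : GenEarDecomp H, evenEarCount E = m}) ⟨_, E, rfl⟩
  obtain ⟨E', hE'⟩ := GenEarDecomp.exists_evenEarCount_eq_of_le hHG E₀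
    fun v => E₀.mem_flatten_of_adj (hH.preconnected.exists_adj_of_nontrivial v).choose_spec
  exact Nat.sInf_le ⟨E', hE'.trans hE₀⟩

theorem muGraph_le_of_le [Finite V] (hHG : H ≤ G) (hH : H.Connected) :
    muGraph G ≤ muGraph H := by
  unfold muGraph
  gcongr
  exact phiGraph_le_of_le hHG hH

lemma IsDominatingSet.mono {U : Set V} (hU : IsDominatingSet H U) (hHG : H ≤ G) :
    IsDominatingSet G U := fun v hv =>
  let ⟨u, hu, hvu⟩ := hU v hv
  ⟨u, hu, hHG hvu⟩

lemma IsBipartitionOf.mem_iff_notMem_of_adj {A B : Set V} (h : IsBipartitionOf G A B)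
    {v w : V} (hvw : G.Adj v w) : v ∈ A ↔ w ∉ A := by
  have hAB : ∀ x, x ∈ A → x ∉ B := fun x hA hB => (h.2.1 ▸ Set.mem_inter hA hB : x ∈ ∅)
  rcases h.2.2 hvw with ⟨hv, hw⟩ | ⟨hv, hw⟩
  · exact iff_of_true hv fun hw' => hAB w hw' hw
  · exact iff_of_false (fun hv' => hAB v hv' hv) (not_not.2 hw)

lemma IsBipartiteGraph.not_adj_of_adj_of_adj (hG : IsBipartiteGraph G) {v w b : V}
    (hvb : G.Adj v b) (hwb : G.Adj w b) : ¬ G.Adj v w := by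
  obtain ⟨A, B, h⟩ := hG
  intro hvw
  have := h.mem_iff_notMem_of_adj hvb
  have := h.mem_iff_notMem_of_adj hwb
  have := h.mem_iff_notMem_of_adj hvw
  tauto

theorem IsCompleteBipartite.of_le (hHc : IsCompleteBipartite H) (hG : IsBipartiteGraph G)
    (hHG : H ≤ G) (hH : H.Connected) : IsCompleteBipartite G := by
  rcases subsingleton_or_nontrivial V with hV | hV
  · rwa [Subsingleton.elim G H]
  obtain ⟨A, B, ⟨hcov, hdisj, hcross⟩, hcomplete⟩ := hHc
  obtain ⟨u⟩ := hH.nonempty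
  obtain ⟨w, huw⟩ := hH.preconnected.exists_adj_of_nontrivial u
  obtain ⟨⟨a, ha⟩, ⟨b, hb⟩⟩ : (∃ a, a ∈ A) ∧ ∃ b, b ∈ B := by
    rcases hcross huw with ⟨h₁, h₂⟩ | ⟨h₁, h₂⟩
    exacts [⟨⟨u, h₁⟩, ⟨w, h₂⟩⟩, ⟨⟨w, h₂⟩, ⟨u, h₁⟩⟩]
  refine ⟨A, B, ⟨hcov, hdisj, fun v w hvw => ?_⟩, fun a ha b hb => hHG (hcomplete a ha b hb)⟩
  rcases hcov v with hv | hv <;> rcases hcov w with hw | hw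
  · exact (hG.not_adj_of_adj_of_adj (hHG (hcomplete v hv b hb))
      (hHG (hcomplete w hw b hb)) hvw).elim
  · exact Or.inl ⟨hv, hw⟩
  · exact Or.inr ⟨hv, hw⟩
  · exact (hG.not_adj_of_adj_of_adj (hHG (hcomplete a ha v hv)).symm
      (hHG (hcomplete a ha w hw)).symm hvw).elim

end

theorem mu_s_spanning_subgraph_general {V : Type} [Fintype V] (G H : SimpleGraph V)
    (hGbip : IsBipartiteGraph G)
    (hsub : H ≤ G) (hHconn : H.Connected) :
    muGraph G ≤ muGraph H ∧ sBip G ≤ sBip H := by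
  refine ⟨muGraph_le_of_le hsub hHconn, ?_⟩
  by_cases hGc : IsCompleteBipartite G
  · simp [sBip, hGc]
  have hHc : ¬ IsCompleteBipartite H := fun h => hGc (h.of_le hGbip hsub hHconn)
  simp only [sBip, if_neg hGc, if_neg hHc]
  obtain ⟨U, hdom, hconn, hmu⟩ := Nat.sInf_mem (s := {m | ∃ U : Set V, IsDominatingSet H U ∧
      (H.induce U).Connected ∧ muGraph (H.induce U) = m})
    ⟨_, Set.univ, fun v hv => (hv trivial).elim,
      (SimpleGraph.induceUnivIso H).connected_iff.2 hHconn, rfl⟩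
  have hUsub : H.induce U ≤ G.induce U := fun _ _ h => hsub h
  refine (Nat.sInf_le ?_).trans ((muGraph_le_of_le hUsub hconn).trans hmu.le)
  exact ⟨U, hdom.mono hsub, hconn.mono hUsub, rfl⟩

/-- **Lemma.** Let `G` be a connected bipartite graph and `H` a connected spanning subgraph of
`G`. Then `μ(G) ≤ μ(H)` and `s(G) ≤ s(H)`. -/
theorem mu_s_spanning_subgraph {V : Type} [Fintype V] (G H : SimpleGraph V)
    (hGconn : G.Connected) (hGbip : IsBipartiteGraph G)
    (hsub : H ≤ G) (hHconn : H.Connected) :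
    muGraph G ≤ muGraph H ∧ sBip G ≤ sBip H :=
  mu_s_spanning_subgraph_general G H hGbip hsub hHconn
end
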